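/- arXiv:1808.10443 — 6 statements merged into one kernel-verified Lean document; each statement's English description precedes it below -/
import Mathlib

section
/- If G is a graph with an odd number of vertices, then mp(G) ≤ ξ(G) + 1, where ξ(G) = min over edges uv of (deg(u) + deg(v) − 2) is the minimum edge-degree of G (assuming G has at least one edge). -/
/-!
Pick an edge `uv` of minimum edge-degree and delete every edge at `u` or `v`: these are
`deg u + deg v - 1 = ξ(G) + 1` edges. Afterwards `u` and `v` are both isolated, so no matching
can miss fewer than two vertices, while a perfect matching is impossible since the order is odd.
-/

open SimpleGraph

/-- An almost-perfect matching: a matching covering all vertices except exactly one. -/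
def SimpleGraph.Subgraph.IsAlmostPerfectMatching {V : Type*} {G : SimpleGraph V}
    (M : G.Subgraph) : Prop :=
  M.IsMatching ∧ ∃ v : V, M.verts = {v}ᶜ

/-- `G` has a perfect matching or an almost-perfect matching. -/
def SimpleGraph.HasGoodMatching {V : Type*} (G : SimpleGraph V) : Prop :=
  (∃ M : G.Subgraph, M.IsPerfectMatching) ∨ (∃ M : G.Subgraph, M.IsAlmostPerfectMatching)

/-- The matching preclusion number of `G`. -/
noncomputable def SimpleGraph.mp {V : Type*} [Fintype V] (G : SimpleGraph V) : ℕ :=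
  sInf { k | ∃ F : Finset (Sym2 V), ↑F ⊆ G.edgeSet ∧ F.card = k ∧
    ¬ (G.deleteEdges ↑F).HasGoodMatching }

open Finset

namespace SimpleGraph

variable {V : Type*} {G : SimpleGraph V} {u v : V}

theorem card_incidenceFinset_union_add_one_of_adj [DecidableEq V] [Fintype (G.neighborSet u)]
    [Fintype (G.neighborSet v)] (h : G.Adj u v) :
    #(G.incidenceFinset u ∪ G.incidenceFinset v) + 1 = G.degree u + G.degree v := by
  have hinter : G.incidenceFinset u ∩ G.incidenceFinset v = {s(u, v)} := by
    rw [← coe_inj, coe_inter, coe_incidenceFinset, coe_incidenceFinset,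
      G.incidenceSet_inter_incidenceSet_of_adj h, coe_singleton]
  rw [← card_incidenceFinset_eq_degree, ← card_incidenceFinset_eq_degree,
    ← card_union_add_card_inter, hinter, card_singleton]

theorem isIsolated_deleteEdges_of_incidenceSet_subset {s : Set (Sym2 V)}
    (hs : G.incidenceSet u ⊆ s) :
    (G.deleteEdges s).IsIsolated u := by
  intro w
  rw [deleteEdges_adj]
  exact fun ⟨huw, hnot⟩ ↦ hnot (hs (G.mk'_mem_incidenceSet_left_iff.2 huw))

theorem Subgraph.IsAlmostPerfectMatching.eq_of_isIsolated {M : G.Subgraph}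
    (hM : M.IsAlmostPerfectMatching) (hu : G.IsIsolated u) (hv : G.IsIsolated v) :
    u = v := by
  obtain ⟨hmatch, x, hverts⟩ := hM
  have eq_of_isolated {y : V} (hy : G.IsIsolated y) : y = x := by
    by_contra hyx
    obtain ⟨w, hyw, -⟩ := hmatch (hverts ▸ hyx : y ∈ M.verts)
    exact hy w (M.adj_sub hyw)
  rw [eq_of_isolated hu, eq_of_isolated hv]

theorem not_hasGoodMatching_of_odd_card [Fintype V] (hodd : Odd (Fintype.card V))
    (huv : u ≠ v) (hu : G.IsIsolated u) (hv : G.IsIsolated v) : ¬G.HasGoodMatching := by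
  rintro (⟨M, hM⟩ | ⟨M, hM⟩)
  · exact Nat.not_even_iff_odd.2 hodd hM.even_card
  · exact huv (hM.eq_of_isIsolated hu hv)

theorem mp_le_card [Fintype V] {F : Finset (Sym2 V)} (hF : ↑F ⊆ G.edgeSet)
    (h : ¬(G.deleteEdges ↑F).HasGoodMatching) : G.mp ≤ #F :=
  Nat.sInf_le ⟨F, hF, rfl, h⟩

end SimpleGraph

theorem stmt3 {V : Type*} [Fintype V] (G : SimpleGraph V) [DecidableRel G.Adj]
    (hodd : Odd (Fintype.card V)) (hne : ∃ u v, G.Adj u v) :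
    G.mp ≤ sInf { k | ∃ u v, G.Adj u v ∧ k = G.degree u + G.degree v - 2 } + 1 := by
  classical
  obtain ⟨u₀, v₀, h₀⟩ := hne
  obtain ⟨u, v, huv, hmin⟩ := Nat.sInf_mem (⟨_, u₀, v₀, h₀, rfl⟩ :
    { k | ∃ u v, G.Adj u v ∧ k = G.degree u + G.degree v - 2 }.Nonempty)
  set F := G.incidenceFinset u ∪ G.incidenceFinset v
  have hF : ↑F ⊆ G.edgeSet := by
    simp only [F, coe_union, coe_incidenceFinset]
    exact Set.union_subset (G.incidenceSet_subset u) (G.incidenceSet_subset v)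
  have hbad : ¬(G.deleteEdges ↑F).HasGoodMatching :=
    not_hasGoodMatching_of_odd_card hodd huv.ne
      (isIsolated_deleteEdges_of_incidenceSet_subset (by simp [F]))
      (isIsolated_deleteEdges_of_incidenceSet_subset (by simp [F]))
  have hcard : #F + 1 = _ := card_incidenceFinset_union_add_one_of_adj huv
  have hdu := (G.degree_pos u).2 huv.not_isIsolated_left
  have hdv := (G.degree_pos v).2 huv.not_isIsolated_right
  rw [hmin]
  have hmp := mp_le_card hF hbad
  omega
end

section
/- For the complete graph K_n with n even and n ≥ 2, mp(K_n) = n − 1. -/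
/-!
Deleting the `n - 1` edges at one vertex isolates it. A perfect matching would have to cover it,
and an almost-perfect matching avoiding it would cover the odd number `n - 1` of vertices.

Conversely, `K_n` splits into `n - 1` pairwise edge-disjoint perfect matchings (round robin: on
`ZMod (n - 1) ∪ {∞}`, matching `r` pairs `∞` with `r` and `x ≠ r` with `2r - x`; this needs `2` to
be invertible, i.e. `n - 1` odd). Fewer than `n - 1` deleted edges miss one of them.
-/

open SimpleGraph

open Function

theorem Pairwise.exists_disjoint_of_finset_card_lt {α ι : Type*} {A : ι → Set α}
    (hA : Pairwise (Disjoint on A)) {F : Finset α} (hF : F.card < Nat.card ι) :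
    ∃ i, Disjoint (A i) F := by
  by_contra! h
  choose g hgA hgF using fun i ↦ Set.not_disjoint_iff.mp (h i)
  have hg : Injective fun i ↦ (⟨g i, hgF i⟩ : F) := fun i j hij ↦ by
    have hgij : g i = g j := Subtype.mk.inj hij
    exact hA.eq (Set.not_disjoint_iff.mpr ⟨g i, hgA i, hgij ▸ hgA j⟩)
  have hle := Nat.card_le_card_of_injective _ hg
  rw [Nat.card_eq_finsetCard] at hle
  omega

namespace ZMod

variable {q : ℕ}

def roundRobin (r : ZMod q) : Option (ZMod q) → Option (ZMod q)
  | none => some r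
  | some x => if x = r then none else some (2 * r - x)

lemma roundRobin_involutive (r : ZMod q) : Involutive (roundRobin r) := by
  rintro (_ | x)
  · simp [roundRobin]
  · by_cases hx : x = r
    · simp [roundRobin, hx]
    · have : 2 * r - x ≠ r := fun h ↦ hx (by linear_combination -h)
      simp [roundRobin, hx, this]

lemma mul_left_cancel_two (hq : Odd q) {a b : ZMod q} (h : 2 * a = 2 * b) : a = b :=
  ((isUnit_iff_coprime 2 q).mpr (Nat.coprime_two_left.mpr hq)).mul_left_cancel (by exact_mod_cast h)

lemma roundRobin_ne (hq : Odd q) (r : ZMod q) (v : Option (ZMod q)) : roundRobin r v ≠ v := by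
  rcases v with _ | x
  · simp [roundRobin]
  · by_cases hx : x = r
    · simp [roundRobin, hx]
    · simp only [roundRobin, hx, if_false, ne_eq, Option.some.injEq]
      exact fun h ↦ hx (mul_left_cancel_two hq (by linear_combination h)).symm

lemma roundRobin_injective_left (hq : Odd q) (v : Option (ZMod q)) :
    Injective fun r : ZMod q ↦ roundRobin r v := by
  intro r r' h
  rcases v with _ | x
  · simpa [roundRobin] using h
  · simp only [roundRobin] at h
    split_ifs at h with hr hr'
    · exact hr.symm.trans hr'
    · exact mul_left_cancel_two hq (by linear_combination Option.some.inj h)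

end ZMod

namespace SimpleGraph

variable {V : Type*} {G : SimpleGraph V}

def Subgraph.ofInvolutive {f : V → V} (hf : Involutive f) (hG : ∀ v, G.Adj v (f v)) :
    G.Subgraph where
  verts := Set.univ
  Adj v w := f v = w
  adj_sub := by rintro v _ rfl; exact hG v
  edge_vert _ := Set.mem_univ _
  symm := ⟨fun v w (h : f v = w) ↦ show f w = v from h ▸ hf v⟩

namespace Subgraph

variable {f g : V → V} (hf : Involutive f) (hg : Involutive g)
  (hGf : ∀ v, G.Adj v (f v)) (hGg : ∀ v, G.Adj v (g v))

lemma isPerfectMatching_ofInvolutive : (ofInvolutive hf hGf).IsPerfectMatching :=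
  isPerfectMatching_iff.mpr fun v ↦ ⟨f v, rfl, fun _ h ↦ Eq.symm h⟩

lemma disjoint_edgeSet_ofInvolutive (hfg : ∀ v, f v ≠ g v) :
    Disjoint (ofInvolutive hf hGf).edgeSet (ofInvolutive hg hGg).edgeSet := by
  rw [Set.disjoint_left]
  rintro ⟨v, w⟩ (hvf : f v = w) (hvg : g v = w)
  exact hfg v (hvf.trans hvg.symm)

lemma IsPerfectMatching.exists_deleteEdges {M : G.Subgraph} (hM : M.IsPerfectMatching)
    {s : Set (Sym2 V)} (hs : Disjoint M.edgeSet s) :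
    ∃ M' : (G.deleteEdges s).Subgraph, M'.IsPerfectMatching := by
  have hle : M.spanningCoe ≤ G.deleteEdges s := fun v w h ↦
    SimpleGraph.deleteEdges_adj.mpr ⟨M.adj_sub h, Set.disjoint_left.mp hs h⟩
  exact ⟨_, (IsPerfectMatching.toSubgraph_iff hle).mpr hM⟩

end Subgraph

section Finite

variable [Fintype V]

lemma exists_pairwise_disjoint_isPerfectMatching_top {q : ℕ} (hq : Odd q)
    (hV : Fintype.card V = q + 1) :
    ∃ M : ZMod q → (⊤ : SimpleGraph V).Subgraph,
      (∀ r, (M r).IsPerfectMatching) ∧ Pairwise (Disjoint on fun r ↦ (M r).edgeSet) := by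
  have : NeZero q := ⟨hq.pos.ne'⟩
  let e : V ≃ Option (ZMod q) := Fintype.equivOfCardEq (by simp [hV])
  let f (r : ZMod q) : V → V := e.symm ∘ ZMod.roundRobin r ∘ e
  have hf (r : ZMod q) : Involutive (f r) := fun v ↦ by
    simp [f, ZMod.roundRobin_involutive r (e v)]
  have hadj (r : ZMod q) (v : V) : (⊤ : SimpleGraph V).Adj v (f r v) := by
    simpa [f, eq_comm, Equiv.eq_symm_apply] using ZMod.roundRobin_ne hq r (e v)
  refine ⟨fun r ↦ .ofInvolutive (hf r) (hadj r),
    fun r ↦ Subgraph.isPerfectMatching_ofInvolutive _ _, fun r r' hrr' ↦ ?_⟩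
  refine Subgraph.disjoint_edgeSet_ofInvolutive _ _ _ _ fun v h ↦ hrr' ?_
  exact ZMod.roundRobin_injective_left hq (e v) (e.symm.injective h)

theorem exists_isPerfectMatching_top_deleteEdges (hV : Even (Fintype.card V))
    {F : Finset (Sym2 V)} (hF : F.card < Fintype.card V - 1) :
    ∃ M : ((⊤ : SimpleGraph V).deleteEdges F).Subgraph, M.IsPerfectMatching := by
  obtain ⟨M, hM, hdisj⟩ := exists_pairwise_disjoint_isPerfectMatching_top (V := V)
    (Nat.Even.sub_odd (by omega) hV odd_one) (by omega)
  obtain ⟨r, hr⟩ := hdisj.exists_disjoint_of_finset_card_lt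
    (F := F) (by rwa [Nat.card_zmod])
  exact (hM r).exists_deleteEdges hr

lemma not_hasGoodMatching_of_isolated (hV : Even (Fintype.card V)) {v : V}
    (hv : ∀ w, ¬ G.Adj v w) : ¬ G.HasGoodMatching := by
  have notMem_verts (M : G.Subgraph) (hM : M.IsMatching) : v ∉ M.verts := fun h ↦
    let ⟨w, hw, _⟩ := hM h
    hv w (M.adj_sub hw)
  rintro (⟨M, hM, hspan⟩ | ⟨M, hM, u, hu⟩)
  · exact notMem_verts M hM (hspan v)
  · obtain rfl : u = v := by
      by_contra h
      exact notMem_verts M hM (hu ▸ Ne.symm h)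
    classical
    have := Fintype.ofFinite M.verts
    have heven := hM.even_card
    rw [Set.toFinset_congr hu, Set.toFinset_compl, Set.toFinset_singleton,
      Finset.card_compl, Finset.card_singleton] at heven
    have hpos := Fintype.card_pos_iff.mpr ⟨u⟩
    exact Nat.not_even_iff_odd.mpr (Nat.Even.sub_odd (by omega) hV odd_one) heven

theorem mp_top_eq [Nonempty V] (hV : Even (Fintype.card V)) :
    (⊤ : SimpleGraph V).mp = Fintype.card V - 1 := by
  classical
  obtain ⟨v⟩ := ‹Nonempty V›
  refine IsLeast.csInf_eq ⟨⟨(⊤ : SimpleGraph V).incidenceFinset v, ?_, ?_, ?_⟩, ?_⟩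
  · rw [coe_incidenceFinset]
    exact incidenceSet_subset _ _
  · rw [card_incidenceFinset_eq_degree, complete_graph_degree]
  · rw [coe_incidenceFinset]
    exact not_hasGoodMatching_of_isolated hV fun w h ↦ (deleteIncidenceSet_adj.mp h).2.1 rfl
  · rintro k ⟨F, -, rfl, hF⟩
    by_contra! hlt
    exact hF (.inl (exists_isPerfectMatching_top_deleteEdges hV hlt))

end Finite

end SimpleGraph

theorem stmt5 (n : ℕ) (hn : Even n) (h2 : 2 ≤ n) :
    (⊤ : SimpleGraph (Fin n)).mp = n - 1 := by
  have : Nonempty (Fin n) := ⟨⟨0, by omega⟩⟩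
  simpa using mp_top_eq (V := Fin n) (by simpa using hn)
end

section
/- For the complete graph K_n with n odd and n ≥ 9, mp(K_n) = 2n − 3. -/
open SimpleGraph

/-!
Deleting the `2n - 3` edges at two vertices isolates both, so no matching misses at most one
vertex. Conversely, let `F` have at most `2n - 4` edges and add to `K_n - F` a vertex `z` joined
to everything; an almost-perfect matching of `K_n - F` is a perfect matching of this cone. If
there is none, Tutte's theorem gives a set `S` whose removal leaves more than `|S|` odd
components, hence at least `|S| + 2` by parity, and `z ∈ S` because `z` is universal. Vertices in
different components are non-adjacent, and `N` vertices split into `K` classes have at least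
`C(N, 2) - C(N - K + 1, 2)` pairs in distinct classes; for `n` odd and `n ≥ 9` this exceeds
`2n - 4`.
-/

open Finset

theorem Function.Surjective.sum_card_fiber_le {W κ : Type*} [Fintype W] [Fintype κ]
    [DecidableEq κ] {c : W → κ} (hc : Function.Surjective c) :
    ∑ x, #{y | c y = c x} ≤ Fintype.card W +
      (Fintype.card W + 1 - Fintype.card κ) * (Fintype.card W - Fintype.card κ) := by
  set N := Fintype.card W
  set K := Fintype.card κ
  set f : κ → ℕ := fun i => #{y | c y = i}
  have hsum : ∑ i, f i = N := (card_eq_sum_card_fiberwise fun x _ => mem_univ (c x)).symm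
  have hpos : ∀ i, 1 ≤ f i := fun i => by
    obtain ⟨x, rfl⟩ := hc i
    exact card_pos.mpr ⟨x, by simp⟩
  -- the other `K - 1` classes are nonempty
  have hle : ∀ i, f i + (K - 1) ≤ N := fun i => by
    rw [← hsum, ← add_sum_erase _ _ (mem_univ i)]
    gcongr
    calc K - 1 = ∑ _j ∈ univ.erase i, 1 := by simp [K, card_erase_of_mem]
      _ ≤ _ := sum_le_sum fun j _ => hpos j
  have hsum' : ∑ i, (f i - 1) = N - K := by
    have : ∑ i, (f i - 1) + K = N := by
      rw [← hsum, show K = ∑ _i : κ, 1 from Fintype.card_eq_sum_ones, ← sum_add_distrib]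
      exact sum_congr rfl fun i _ => Nat.sub_add_cancel (hpos i)
    omega
  calc ∑ x, #{y | c y = c x} = ∑ i, f i * f i := by
        rw [← sum_fiberwise univ c]
        refine sum_congr rfl fun i _ => ?_
        rw [sum_congr rfl fun x hx => by rw [(mem_filter.mp hx).2], sum_const, smul_eq_mul]
    _ ≤ ∑ i, (f i + (N + 1 - K) * (f i - 1)) := by
        gcongr with i
        obtain ⟨g, hg⟩ : ∃ g, f i = g + 1 := ⟨f i - 1, by have := hpos i; omega⟩
        have : g + 1 ≤ N + 1 - K := by have := hle i; omega
        rw [hg, Nat.add_sub_cancel]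
        nlinarith
    _ = _ := by rw [sum_add_distrib, ← mul_sum, hsum, hsum']

namespace SimpleGraph

variable {V : Type*} {G : SimpleGraph V}

theorem Subgraph.isInduced_top_deleteVerts (S : Set V) :
    ((⊤ : G.Subgraph).deleteVerts S).IsInduced := fun _ hv _ hw hadj => by
  simp_all

theorem Subgraph.card_verts_top_deleteVerts [Finite V] (S : Set V) :
    Nat.card ((⊤ : G.Subgraph).deleteVerts S).verts = Nat.card V - S.ncard := by
  rw [Subgraph.deleteVerts_verts, Subgraph.verts_top, Nat.card_coe_set_eq,
    Set.ncard_sdiff (Set.subset_univ S), Set.ncard_univ]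

theorem IsTutteViolator.ncard_add_two_le [Finite V] (hV : Even (Nat.card V)) {S : Set V}
    (h : G.IsTutteViolator S) :
    S.ncard + 2 ≤ ((⊤ : G.Subgraph).deleteVerts S).coe.oddComponents.ncard := by
  have hpar := ((⊤ : G.Subgraph).deleteVerts S).coe.odd_ncard_oddComponents
  have hS : S.ncard ≤ Nat.card V := Set.ncard_le_card S
  rw [Subgraph.card_verts_top_deleteVerts, Nat.odd_iff, Nat.odd_iff] at hpar
  rw [Nat.even_iff] at hV
  unfold IsTutteViolator at h
  omega

theorem IsTutteViolator.mem_of_isUniversal [Finite V] (hV : Even (Nat.card V)) {S : Set V} {z : V}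
    (h : G.IsTutteViolator S) (hz : G.IsUniversal z) : z ∈ S := by
  by_contra hzS
  set z' : ((⊤ : G.Subgraph).deleteVerts S).verts := ⟨z, by simp [hzS]⟩
  have hreach : ∀ x, ((⊤ : G.Subgraph).deleteVerts S).coe.Reachable z' x := fun x => by
    by_cases hx : z' = x
    · exact hx ▸ Reachable.refl _
    · refine Adj.reachable (G := ((⊤ : G.Subgraph).deleteVerts S).coe) ?_
      exact (Subgraph.isInduced_top_deleteVerts S).adj.mpr (hz (Subtype.coe_ne_coe.mpr hx))
  have := Preconnected.subsingleton_connectedComponent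
    (fun x y => (hreach x).symm.trans (hreach y) :
      ((⊤ : G.Subgraph).deleteVerts S).coe.Preconnected)
  have := Set.ncard_le_one_of_subsingleton ((⊤ : G.Subgraph).deleteVerts S).coe.oddComponents
  have := h.ncard_add_two_le hV
  omega

/-- Pairs of vertices of `H` in distinct components are non-edges of `G`; this is the bound
`2 · #non-edges ≥ N (N - 1) - (N - K + 1) (N - K)` for `N` vertices and `K` components. -/
theorem Subgraph.IsInduced.card_mul_card_le [Finite V] {H : G.Subgraph} (hH : H.IsInduced) :
    Nat.card H.verts * Nat.card H.verts ≤ 2 * Gᶜ.edgeSet.ncard + Nat.card H.verts +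
      (Nat.card H.verts + 1 - Nat.card H.coe.ConnectedComponent) *
        (Nat.card H.verts - Nat.card H.coe.ConnectedComponent) := by
  classical
  cases nonempty_fintype V
  set c := H.coe.connectedComponentMk
  have hdeg : ∀ x, #{y | c y ≠ c x} ≤ Gᶜ.degree x := fun x => by
    rw [← card_neighborFinset_eq_degree]
    refine card_le_card_of_injOn Subtype.val (fun y hy => ?_) Subtype.val_injective.injOn
    have hxy : c y ≠ c x := (mem_filter.mp hy).2
    rw [mem_coe, mem_neighborFinset, compl_adj]
    refine ⟨fun h => hxy (by rw [Subtype.val_injective h]), fun hadj => hxy ?_⟩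
    exact (ConnectedComponent.connectedComponentMk_eq_of_adj (hH.adj.mpr hadj)).symm
  have hsum : ∑ x : H.verts, Gᶜ.degree x ≤ 2 * Gᶜ.edgeSet.ncard := by
    rw [← coe_edgeFinset, Set.ncard_coe_finset, ← sum_degrees_eq_twice_card_edges]
    calc ∑ x : H.verts, Gᶜ.degree x
        = ∑ v ∈ univ.map (Function.Embedding.subtype (· ∈ H.verts)), Gᶜ.degree v := by
          rw [sum_map]; rfl
      _ ≤ ∑ v, Gᶜ.degree v := sum_le_sum_of_subset (subset_univ _)
  have hsplit :
      ∑ x, (#{y | c y ≠ c x} + #{y | c y = c x}) = Nat.card H.verts * Nat.card H.verts := by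
    simp_rw [add_comm, card_filter_add_card_filter_not, sum_const, card_univ, smul_eq_mul,
      Nat.card_eq_fintype_card]
  have hfiber :=
    (show Function.Surjective c from fun C => C.ind fun v => ⟨v, rfl⟩).sum_card_fiber_le
  rw [← Nat.card_eq_fintype_card, ← Nat.card_eq_fintype_card] at hfiber
  rw [sum_add_distrib] at hsplit
  have := sum_le_sum fun x (_ : x ∈ univ) => hdeg x
  omega

theorem exists_isPerfectMatching_of_isUniversal [Finite V] (hV : Even (Nat.card V))
    (h10 : 10 ≤ Nat.card V) {z : V} (hz : G.IsUniversal z)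
    (hG : Gᶜ.edgeSet.ncard + 6 ≤ 2 * Nat.card V) :
    ∃ M : G.Subgraph, M.IsPerfectMatching := by
  rw [tutte]
  intro S hS
  set H := (⊤ : G.Subgraph).deleteVerts S
  have hzS := hS.mem_of_isUniversal hV hz
  have hodd := hS.ncard_add_two_le hV
  have hK : H.coe.oddComponents.ncard ≤ Nat.card H.coe.ConnectedComponent := Set.ncard_le_card _
  have hKN : Nat.card H.coe.ConnectedComponent ≤ Nat.card H.verts :=
    Nat.card_le_card_of_surjective _ fun C => C.ind fun v => ⟨v, rfl⟩
  have hN : Nat.card H.verts + S.ncard = Nat.card V := by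
    have := Set.ncard_le_card S
    rw [Subgraph.card_verts_top_deleteVerts]
    omega
  have hS1 : 1 ≤ S.ncard := (Set.ncard_pos (Set.toFinite S)).mpr ⟨z, hzS⟩
  have hcount := (Subgraph.isInduced_top_deleteVerts (G := G) S).card_mul_card_le
  set K := Nat.card H.coe.ConnectedComponent
  obtain ⟨a, ha⟩ := Nat.exists_eq_add_of_le hKN
  obtain ⟨b, hb⟩ := Nat.exists_eq_add_of_le (hodd.trans hK)
  rw [ha, show K + a + 1 - K = a + 1 by omega, Nat.add_sub_cancel_left, hb] at hcount
  rw [← hN, ha, hb] at h10 hG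
  -- tight for `S = {z}` leaving two singletons, and for `Nat.card V = 10` with `|S| = 4` leaving
  -- six singletons: this is where `10 ≤ Nat.card V` is needed
  nlinarith

def cone (G : SimpleGraph V) : SimpleGraph (Option V) :=
  G.map Function.Embedding.some ⊔ fromRel fun a _ => a = none

@[simp]
theorem cone_adj_some {a b : V} : G.cone.Adj (some a) (some b) ↔ G.Adj a b := by
  simp only [cone, sup_adj, map_adj, fromRel_adj]; simp

theorem isUniversal_cone_none : G.cone.IsUniversal none := fun _ h => by
  simp [cone, h]

theorem compl_cone : G.coneᶜ = Gᶜ.map Function.Embedding.some := by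
  ext (_ | a) (_ | b) <;> simp only [cone, compl_adj, sup_adj, map_adj, fromRel_adj] <;> simp

theorem ncard_edgeSet_compl_cone : G.coneᶜ.edgeSet.ncard = Gᶜ.edgeSet.ncard := by
  rw [compl_cone, edgeSet_map,
    Set.ncard_image_of_injective _ Function.Embedding.some.sym2Map.injective]

theorem Subgraph.IsPerfectMatching.exists_isAlmostPerfectMatching_of_cone
    {M : G.cone.Subgraph} (hM : M.IsPerfectMatching) :
    ∃ M' : G.Subgraph, M'.IsAlmostPerfectMatching := by
  obtain ⟨_ | x, hx, -⟩ := hM.1 (hM.2 none)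
  · exact absurd (M.adj_sub hx) (G.cone.loopless.irrefl none)
  have hnone : ∀ {a}, M.Adj a none → a = some x := fun h => hM.1.eq_of_adj_left h.symm hx
  have hx' : ∀ {a}, M.Adj (some x) a → a = none := fun h => hM.1.eq_of_adj_left h hx.symm
  refine ⟨{ verts := {x}ᶜ,
             Adj := fun a b => M.Adj (some a) (some b),
             adj_sub := fun h => cone_adj_some.mp (M.adj_sub h),
             edge_vert := fun h hax =>
               Option.some_ne_none _ (hx' (Set.mem_singleton_iff.mp hax ▸ h)),
             symm := ⟨fun _ _ h => h.symm⟩ }, fun a ha => ?_, x, rfl⟩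
  obtain ⟨_ | b, hab, huniq⟩ := hM.1 (hM.2 (some a))
  · exact absurd (Option.some_inj.mp (hnone hab)) ha
  exact ⟨b, hab, fun c hac => Option.some_inj.mp (huniq _ hac)⟩

theorem exists_isAlmostPerfectMatching_of_ncard_compl_edgeSet_le [Finite V]
    (hV : Odd (Nat.card V)) (h9 : 9 ≤ Nat.card V)
    (hG : Gᶜ.edgeSet.ncard + 4 ≤ 2 * Nat.card V) :
    ∃ M : G.Subgraph, M.IsAlmostPerfectMatching := by
  rw [← ncard_edgeSet_compl_cone] at hG
  obtain ⟨M, hM⟩ := exists_isPerfectMatching_of_isUniversal (G := G.cone)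
    (by rw [Finite.card_option]; exact hV.add_one) (by rw [Finite.card_option]; omega)
    isUniversal_cone_none (by rw [Finite.card_option]; omega)
  exact hM.exists_isAlmostPerfectMatching_of_cone

theorem not_hasGoodMatching_of_isolated_s6 {a b : V} (hab : a ≠ b) (ha : ∀ w, ¬G.Adj a w)
    (hb : ∀ w, ¬G.Adj b w) : ¬G.HasGoodMatching := by
  have hcover {M : G.Subgraph} (hM : M.IsMatching) {v : V} (hv : v ∈ M.verts) :
      ∃ w, G.Adj v w :=
    (hM hv).imp fun _ hw => M.adj_sub hw.1
  rintro (⟨M, hM⟩ | ⟨M, hM, v, hv⟩)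
  · exact (hcover hM.1 (hM.2 a)).elim ha
  · by_cases hav : a = v
    · exact (hcover hM (by rw [hv]; exact hav ▸ hab.symm)).elim hb
    · exact (hcover hM (by rw [hv]; exact hav)).elim ha

theorem not_hasGoodMatching_deleteEdges_incidenceSet {a b : V} (hab : a ≠ b) :
    ¬(G.deleteEdges (G.incidenceSet a ∪ G.incidenceSet b)).HasGoodMatching := by
  refine not_hasGoodMatching_of_isolated_s6 hab (fun w h => ?_) (fun w h => ?_) <;>
    obtain ⟨hadj, hdel⟩ := deleteEdges_adj.mp h
  · exact hdel (.inl ((mem_incidenceSet ..).mpr hadj))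
  · exact hdel (.inr ((mem_incidenceSet ..).mpr hadj))

theorem card_incidenceFinset_union_of_adj [Fintype V] [DecidableEq V] [DecidableRel G.Adj]
    {a b : V} (hab : G.Adj a b) :
    #(G.incidenceFinset a ∪ G.incidenceFinset b) + 1 = G.degree a + G.degree b := by
  have hinter : G.incidenceFinset a ∩ G.incidenceFinset b = {s(a, b)} := by
    rw [← coe_inj, coe_inter, coe_incidenceFinset, coe_incidenceFinset,
      G.incidenceSet_inter_incidenceSet_of_adj hab, coe_singleton]
  rw [← card_incidenceFinset_eq_degree, ← card_incidenceFinset_eq_degree,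
    ← card_union_add_card_inter, hinter, card_singleton]

theorem compl_top_deleteEdges (s : Set (Sym2 V)) :
    ((⊤ : SimpleGraph V).deleteEdges s)ᶜ = fromEdgeSet s := by
  rw [deleteEdges, top_sdiff, compl_compl]

theorem mp_eq_card [Fintype V] {F : Finset (Sym2 V)} (hF : ↑F ⊆ G.edgeSet)
    (hbad : ¬(G.deleteEdges ↑F).HasGoodMatching)
    (hgood : ∀ F' : Finset (Sym2 V), ↑F' ⊆ G.edgeSet → #F' < #F →
      (G.deleteEdges ↑F').HasGoodMatching) :
    G.mp = #F := by
  have hmem : #F ∈ {k | ∃ F : Finset (Sym2 V), ↑F ⊆ G.edgeSet ∧ #F = k ∧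
      ¬(G.deleteEdges ↑F).HasGoodMatching} := ⟨F, hF, rfl, hbad⟩
  refine le_antisymm (Nat.sInf_le hmem) (le_csInf ⟨_, hmem⟩ ?_)
  rintro _ ⟨F', hF', rfl, hbad'⟩
  exact not_lt.mp fun hlt => hbad' (hgood F' hF' hlt)

theorem mp_top_of_odd [Fintype V] (hV : Odd (Fintype.card V)) (h9 : 9 ≤ Fintype.card V) :
    (⊤ : SimpleGraph V).mp = 2 * Fintype.card V - 3 := by
  classical
  obtain ⟨a, b, hab⟩ := Fintype.one_lt_card_iff_nontrivial.mp (by omega : 1 < Fintype.card V)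
  have hcard := card_incidenceFinset_union_of_adj (G := ⊤) hab
  simp only [complete_graph_degree] at hcard
  rw [show 2 * Fintype.card V - 3 = #((⊤ : SimpleGraph V).incidenceFinset a ∪
    (⊤ : SimpleGraph V).incidenceFinset b) by omega]
  refine mp_eq_card ?_ ?_ fun F _ hF => .inr ?_
  · rw [coe_union, coe_incidenceFinset, coe_incidenceFinset]
    exact Set.union_subset (incidenceSet_subset _ _) (incidenceSet_subset _ _)
  · rw [coe_union, coe_incidenceFinset, coe_incidenceFinset]
    exact not_hasGoodMatching_deleteEdges_incidenceSet hab
  · have hcompl : ((⊤ : SimpleGraph V).deleteEdges ↑F)ᶜ.edgeSet.ncard ≤ #F := by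
      rw [compl_top_deleteEdges, edgeSet_fromEdgeSet, ← Set.ncard_coe_finset]
      exact Set.ncard_le_ncard Set.sdiff_subset
    rw [← Nat.card_eq_fintype_card] at hV h9 hcard
    exact exists_isAlmostPerfectMatching_of_ncard_compl_edgeSet_le hV h9 (by omega)

end SimpleGraph

theorem stmt6 (n : ℕ) (hn : Odd n) (h9 : 9 ≤ n) :
    (⊤ : SimpleGraph (Fin n)).mp = 2 * n - 3 := by
  simpa using mp_top_of_odd (V := Fin n) (by simpa) (by simpa)
end

section
/- Let G be a graph with an even number n ≥ 4 of vertices. Then mp(G) = n − 2 if and only if δ(G) = n − 2. -/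
open SimpleGraph Finset

namespace MPaux

variable {V : Type*} [DecidableEq V] [Fintype V]

/-- The two-element vertex finset of a `Sym2`. -/
def evs : Sym2 V → Finset V :=
  Sym2.lift ⟨fun a b => ({a, b} : Finset V), fun a b => by simp [Finset.pair_comm]⟩

@[simp] lemma evs_mk (a b : V) : evs s(a, b) = {a, b} := rfl

lemma mem_evs {e : Sym2 V} {x : V} : x ∈ evs e ↔ x ∈ e := by
  induction e with
  | _ a b => simp [Sym2.mem_iff]

lemma card_evs {e : Sym2 V} (h : ¬ e.IsDiag) : (evs e).card = 2 := by
  induction e with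
  | _ a b =>
    simp [Sym2.mk_isDiag_iff] at h
    simp [Finset.card_insert_of_notMem, h]

/-- A good partial matching within `s` avoiding `B`. -/
structure Good (s : Finset V) (B : Finset (Sym2 V)) (M : Finset (Sym2 V)) : Prop where
  ndiag : ∀ e ∈ M, ¬ e.IsDiag
  within : ∀ e ∈ M, ∀ v ∈ e, v ∈ s
  disj : ∀ e ∈ M, ∀ e' ∈ M, e ≠ e' → ∀ v, v ∈ e → v ∉ e'
  avoid : ∀ e ∈ M, e ∉ B

/-- `M` is a perfect matching of `s` (as a set of disjoint pairs covering `s`). -/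
def Perf (s : Finset V) (M : Finset (Sym2 V)) : Prop :=
  (∀ e ∈ M, ¬ e.IsDiag) ∧ (∀ e ∈ M, ∀ v ∈ e, v ∈ s) ∧
    (∀ e ∈ M, ∀ e' ∈ M, e ≠ e' → ∀ v, v ∈ e → v ∉ e') ∧
    (∀ x ∈ s, ∃ e ∈ M, x ∈ e)

/-- covered vertices -/
def cov (M : Finset (Sym2 V)) : Finset V := M.biUnion evs

lemma mem_cov {M : Finset (Sym2 V)} {x : V} : x ∈ cov M ↔ ∃ e ∈ M, x ∈ e := by
  simp [cov, mem_evs]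

lemma card_cov {M : Finset (Sym2 V)}
    (hd : ∀ e ∈ M, ∀ e' ∈ M, e ≠ e' → ∀ v, v ∈ e → v ∉ e')
    (hnd : ∀ e ∈ M, ¬ e.IsDiag) : (cov M).card = 2 * M.card := by
  rw [cov, Finset.card_biUnion, Finset.sum_congr rfl (fun e he => card_evs (hnd e he))]
  · simp [mul_comm]
  · intro e he e' he' hne
    simp only [Finset.disjoint_left]
    intro a ha ha'
    exact hd e he e' he' hne a (mem_evs.1 ha) (mem_evs.1 ha')

end MPaux

namespace MPaux

set_option linter.unusedSectionVars false

variable {V : Type*} [DecidableEq V] [Fintype V]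

lemma cov_subset {s : Finset V} {B M : Finset (Sym2 V)} (h : Good s B M) :
    cov M ⊆ s := by
  intro x hx
  rcases mem_cov.1 hx with ⟨e, he, hxe⟩
  exact h.within e he x hxe

/-- non-B-neighbors of u within s -/
def nbr (s : Finset V) (B : Finset (Sym2 V)) (u : V) : Finset V :=
  (s.erase u).filter (fun w => s(u, w) ∉ B)

lemma nbr_card {s : Finset V} {B : Finset (Sym2 V)} {u : V} {d : ℕ} (hu : u ∈ s)
    (hB : ((s.erase u).filter (fun w => s(u, w) ∈ B)).card ≤ d) :
    s.card - 1 - d ≤ (nbr s B u).card := by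
  have h1 : ((s.erase u).filter (fun w => s(u, w) ∈ B)).card + (nbr s B u).card
      = (s.erase u).card := Finset.card_filter_add_card_filter_not _
  have h2 : (s.erase u).card = s.card - 1 := Finset.card_erase_of_mem hu
  have h3 : 1 ≤ s.card := Finset.card_pos.2 ⟨u, hu⟩
  omega

lemma pair_count (N : Finset V) (x y : V) (hxy : x ≠ y) :
    (N ∩ ({x, y} : Finset V)).card
      = (if x ∈ N then 1 else 0) + (if y ∈ N then 1 else 0) := by
  by_cases hx : x ∈ N <;> by_cases hy : y ∈ N
  · rw [show N ∩ ({x, y} : Finset V) = {x, y} from by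
      ext z; simp only [Finset.mem_inter, Finset.mem_insert, Finset.mem_singleton]
      constructor
      · tauto
      · rintro (rfl | rfl) <;> tauto]
    simp [Finset.card_insert_of_notMem, hxy, hx, hy]
  · rw [show N ∩ ({x, y} : Finset V) = {x} from by
      ext z; simp only [Finset.mem_inter, Finset.mem_insert, Finset.mem_singleton]
      constructor
      · rintro ⟨h1, (rfl | rfl)⟩ <;> tauto
      · rintro rfl; tauto]
    simp [hx, hy]
  · rw [show N ∩ ({x, y} : Finset V) = {y} from by
      ext z; simp only [Finset.mem_inter, Finset.mem_insert, Finset.mem_singleton]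
      constructor
      · rintro ⟨h1, (rfl | rfl)⟩ <;> tauto
      · rintro rfl; tauto]
    simp [hx, hy]
  · rw [show N ∩ ({x, y} : Finset V) = ∅ from by
      ext z; simp only [Finset.mem_inter, Finset.mem_insert, Finset.mem_singleton,
        Finset.notMem_empty, iff_false, not_and]
      rintro h1 (rfl | rfl) <;> tauto]
    simp [hx, hy]

lemma swap_aux {s : Finset V} {B M : Finset (Sym2 V)} {u v x y : V}
    (hM : Good s B M) (hu : u ∈ s) (hv : v ∈ s) (huv : u ≠ v)
    (hcu : u ∉ cov M) (hcv : v ∉ cov M)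
    (he : s(x, y) ∈ M) (hx : x ∈ nbr s B u) (hy : y ∈ nbr s B v) :
    ∃ M', Good s B M' ∧ M'.card = M.card + 1 := by
  have hxy : x ≠ y := fun h => hM.ndiag _ he (by simp [h])
  have hxcov : x ∈ cov M := mem_cov.2 ⟨_, he, by simp⟩
  have hycov : y ∈ cov M := mem_cov.2 ⟨_, he, by simp⟩
  have hux : u ≠ x := fun h => hcu (h ▸ hxcov)
  have huy : u ≠ y := fun h => hcu (h ▸ hycov)
  have hvx : v ≠ x := fun h => hcv (h ▸ hxcov)
  have hvy : v ≠ y := fun h => hcv (h ▸ hycov)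
  have hxs : x ∈ s := Finset.mem_of_mem_erase (Finset.mem_of_mem_filter _ hx)
  have hys : y ∈ s := Finset.mem_of_mem_erase (Finset.mem_of_mem_filter _ hy)
  have hxB : s(u, x) ∉ B := (Finset.mem_filter.1 hx).2
  have hyB : s(v, y) ∉ B := (Finset.mem_filter.1 hy).2
  have hunotM : ∀ e ∈ M, u ∉ e := fun e heM hue => hcu (mem_cov.2 ⟨e, heM, hue⟩)
  have hvnotM : ∀ e ∈ M, v ∉ e := fun e heM hve => hcv (mem_cov.2 ⟨e, heM, hve⟩)
  refine ⟨insert s(u, x) (insert s(v, y) (M.erase s(x, y))), ?_, ?_⟩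
  · constructor
    · intro e heM
      rcases Finset.mem_insert.1 heM with rfl | heM
      · simp [Sym2.mk_isDiag_iff, hux]
      rcases Finset.mem_insert.1 heM with rfl | heM
      · simp [Sym2.mk_isDiag_iff, hvy]
      · exact hM.ndiag e (Finset.mem_of_mem_erase heM)
    · intro e heM w hw
      rcases Finset.mem_insert.1 heM with rfl | heM
      · rcases Sym2.mem_iff.1 hw with rfl | rfl <;> assumption
      rcases Finset.mem_insert.1 heM with rfl | heM
      · rcases Sym2.mem_iff.1 hw with rfl | rfl <;> assumption
      · exact hM.within e (Finset.mem_of_mem_erase heM) w hw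
    · -- disjointness
      have hdis : ∀ e ∈ M.erase s(x, y), ∀ w, w ∈ e → w ∉ s(u, x) ∧ w ∉ s(v, y) := by
        intro e heM w hw
        have heM' := Finset.mem_of_mem_erase heM
        have hne : e ≠ s(x, y) := Finset.ne_of_mem_erase heM
        have hwx : w ≠ x := fun h =>
          hM.disj _ heM' _ he hne w hw (by simp [h])
        have hwy : w ≠ y := fun h =>
          hM.disj _ heM' _ he hne w hw (by simp [h])
        have hwu : w ≠ u := fun h => hunotM e heM' (h ▸ hw)
        have hwv : w ≠ v := fun h => hvnotM e heM' (h ▸ hw)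
        constructor <;> simp [Sym2.mem_iff, hwx, hwy, hwu, hwv]
      intro e heM e' heM' hne w hw
      rcases Finset.mem_insert.1 heM with rfl | heM <;>
        [skip; rcases Finset.mem_insert.1 heM with rfl | heM] <;>
        rcases Finset.mem_insert.1 heM' with rfl | heM' <;>
        [skip; rcases Finset.mem_insert.1 heM' with rfl | heM'; skip;
          rcases Finset.mem_insert.1 heM' with rfl | heM'; skip;
          rcases Finset.mem_insert.1 heM' with rfl | heM']
      · exact absurd rfl hne
      · rcases Sym2.mem_iff.1 hw with rfl | rfl <;>
          simp [Sym2.mem_iff, huv, huy, hvx.symm, hxy]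
      · intro hw'; exact (hdis e' heM' w hw').1 hw
      · rcases Sym2.mem_iff.1 hw with rfl | rfl <;>
          simp [Sym2.mem_iff, huv.symm, hvx, huy.symm, hxy.symm]
      · exact absurd rfl hne
      · intro hw'; exact (hdis e' heM' w hw').2 hw
      · exact fun hw' => (hdis e heM w hw).1 hw'
      · exact fun hw' => (hdis e heM w hw).2 hw'
      · exact hM.disj e (Finset.mem_of_mem_erase heM) e' (Finset.mem_of_mem_erase heM')
          hne w hw
    · intro e heM
      rcases Finset.mem_insert.1 heM with rfl | heM
      · exact hxB
      rcases Finset.mem_insert.1 heM with rfl | heM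
      · exact hyB
      · exact hM.avoid e (Finset.mem_of_mem_erase heM)
  · have h1 : s(v, y) ∉ M.erase s(x, y) := fun h =>
      hvnotM _ (Finset.mem_of_mem_erase h) (by simp)
    have h2 : s(u, x) ∉ insert s(v, y) (M.erase s(x, y)) := by
      intro h
      rcases Finset.mem_insert.1 h with h | h
      · rw [Sym2.eq_iff] at h; tauto
      · exact hunotM _ (Finset.mem_of_mem_erase h) (by simp)
    rw [Finset.card_insert_of_notMem h2, Finset.card_insert_of_notMem h1,
      Finset.card_erase_of_mem he]
    have : 1 ≤ M.card := Finset.card_pos.2 ⟨_, he⟩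
    omega

end MPaux

namespace MPaux

set_option linter.unusedSectionVars false

variable {V : Type*} [DecidableEq V] [Fintype V]

lemma extend_aux {s : Finset V} {B M : Finset (Sym2 V)} {u w : V}
    (hM : Good s B M) (hu : u ∈ s) (hcu : u ∉ cov M)
    (hw : w ∈ nbr s B u) (hcw : w ∉ cov M) :
    ∃ M', Good s B M' ∧ M'.card = M.card + 1 := by
  have hws : w ∈ s := Finset.mem_of_mem_erase (Finset.mem_of_mem_filter _ hw)
  have huw : u ≠ w := fun h => (Finset.mem_erase.1 (Finset.mem_of_mem_filter _ hw)).1 h.symm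
  have hB : s(u, w) ∉ B := (Finset.mem_filter.1 hw).2
  have hnotM : ∀ e ∈ M, u ∉ e ∧ w ∉ e := fun e heM =>
    ⟨fun h => hcu (mem_cov.2 ⟨e, heM, h⟩), fun h => hcw (mem_cov.2 ⟨e, heM, h⟩)⟩
  have hnew : s(u, w) ∉ M := fun h => (hnotM _ h).1 (by simp)
  refine ⟨insert s(u, w) M, ?_, Finset.card_insert_of_notMem hnew⟩
  constructor
  · intro e heM
    rcases Finset.mem_insert.1 heM with rfl | heM
    · simp [Sym2.mk_isDiag_iff, huw]
    · exact hM.ndiag e heM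
  · intro e heM z hz
    rcases Finset.mem_insert.1 heM with rfl | heM
    · rcases Sym2.mem_iff.1 hz with rfl | rfl <;> assumption
    · exact hM.within e heM z hz
  · intro e heM e' heM' hne z hz
    rcases Finset.mem_insert.1 heM with rfl | heM <;>
      rcases Finset.mem_insert.1 heM' with rfl | heM'
    · exact absurd rfl hne
    · intro hz'
      rcases Sym2.mem_iff.1 hz with h | h
      · exact (hnotM _ heM').1 (h ▸ hz')
      · exact (hnotM _ heM').2 (h ▸ hz')
    · intro hz'
      rcases Sym2.mem_iff.1 hz' with h | h
      · exact (hnotM _ heM).1 (h ▸ hz)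
      · exact (hnotM _ heM).2 (h ▸ hz)
    · exact hM.disj e heM e' heM' hne z hz
  · intro e heM
    rcases Finset.mem_insert.1 heM with rfl | heM
    · exact hB
    · exact hM.avoid e heM

lemma grow {s : Finset V} {B : Finset (Sym2 V)} {d : ℕ}
    (hB : ∀ x ∈ s, ((s.erase x).filter (fun w => s(x, w) ∈ B)).card ≤ d)
    (heven : Even s.card) (hd : 2 * d < s.card) :
    ∀ k, ∀ M : Finset (Sym2 V), Good s B M → s.card - 2 * M.card ≤ k →
      ∃ P, Perf s P ∧ ∀ e ∈ P, e ∉ B := by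
  intro k
  induction k with
  | zero =>
    intro M hM hk
    have hcov : cov M ⊆ s := cov_subset hM
    have hcard : (cov M).card = 2 * M.card := card_cov hM.disj hM.ndiag
    have hceq : cov M = s := Finset.eq_of_subset_of_card_le hcov (by omega)
    have : s ⊆ cov M := hceq ▸ Finset.Subset.refl s
    exact ⟨M, ⟨hM.ndiag, hM.within, hM.disj, fun x hx => mem_cov.1 (this hx)⟩, hM.avoid⟩
  | succ k ih =>
    intro M hM hk
    have hcov : cov M ⊆ s := cov_subset hM
    have hcard : (cov M).card = 2 * M.card := card_cov hM.disj hM.ndiag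
    by_cases hdone : s.card - 2 * M.card = 0
    · -- perfect already; reuse the zero argument
      have hceq : cov M = s := Finset.eq_of_subset_of_card_le hcov (by omega)
      have hsub : s ⊆ cov M := hceq ▸ Finset.Subset.refl s
      exact ⟨M, ⟨hM.ndiag, hM.within, hM.disj, fun x hx => mem_cov.1 (hsub hx)⟩, hM.avoid⟩
    · -- at least two uncovered vertices
      have h2M : 2 * M.card ≤ s.card := hcard ▸ Finset.card_le_card hcov
      have huncard : (s \ cov M).card = s.card - 2 * M.card := by
        rw [Finset.card_sdiff_of_subset hcov, hcard]
      have heun : Even (s \ cov M).card := by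
        rw [huncard]
        rcases heven with ⟨m, hm⟩
        exact ⟨m - M.card, by omega⟩
      have hun2 : 2 ≤ (s \ cov M).card := by
        rcases heun with ⟨m, hm⟩
        omega
      obtain ⟨u, hu', v, hv', huv⟩ := Finset.one_lt_card.1 (show 1 < (s \ cov M).card by omega)
      have hu : u ∈ s := (Finset.mem_sdiff.1 hu').1
      have hv : v ∈ s := (Finset.mem_sdiff.1 hv').1
      have hcu : u ∉ cov M := (Finset.mem_sdiff.1 hu').2
      have hcv : v ∉ cov M := (Finset.mem_sdiff.1 hv').2
      -- find a bigger matching M'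
      have hbig : ∃ M', Good s B M' ∧ M'.card = M.card + 1 := by
        by_cases hAu : ∃ w ∈ nbr s B u, w ∉ cov M
        · obtain ⟨w, hw, hcw⟩ := hAu
          exact extend_aux hM hu hcu hw hcw
        by_cases hAv : ∃ w ∈ nbr s B v, w ∉ cov M
        · obtain ⟨w, hw, hcw⟩ := hAv
          exact extend_aux hM hv hcv hw hcw
        push_neg at hAu hAv
        -- counting argument
        set Nu := nbr s B u with hNu
        set Nv := nbr s B v with hNv
        have hNucov : Nu ⊆ cov M := fun w hw => hAu w hw
        have hNvcov : Nv ⊆ cov M := fun w hw => hAv w hw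
        have hsplit : ∀ N : Finset V, N ⊆ cov M →
            N.card = ∑ e ∈ M, (N ∩ evs e).card := by
          intro N hN
          have : N = M.biUnion (fun e => N ∩ evs e) := by
            ext z
            simp only [Finset.mem_biUnion, Finset.mem_inter]
            constructor
            · intro hz
              obtain ⟨e, he, hze⟩ := mem_cov.1 (hN hz)
              exact ⟨e, he, hz, mem_evs.2 hze⟩
            · rintro ⟨e, he, hz, _⟩; exact hz
          conv_lhs => rw [this]
          apply Finset.card_biUnion
          intro e he e' he' hne
          simp only [Finset.disjoint_left, Finset.mem_inter]
          rintro a ⟨-, ha⟩ ⟨-, ha'⟩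
          exact hM.disj e he e' he' hne a (mem_evs.1 ha) (mem_evs.1 ha')
        by_cases hall : ∀ e ∈ M, (Nu ∩ evs e).card + (Nv ∩ evs e).card ≤ 2
        · exfalso
          have hsum : Nu.card + Nv.card ≤ 2 * M.card := by
            rw [hsplit Nu hNucov, hsplit Nv hNvcov, ← Finset.sum_add_distrib]
            calc ∑ e ∈ M, ((Nu ∩ evs e).card + (Nv ∩ evs e).card)
                ≤ ∑ _e ∈ M, 2 := Finset.sum_le_sum hall
              _ = 2 * M.card := by rw [Finset.sum_const, smul_eq_mul, mul_comm]
          have hNuc := nbr_card hu (hB u hu)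
          have hNvc := nbr_card hv (hB v hv)
          rw [← hNu] at hNuc
          rw [← hNv] at hNvc
          omega
        · push_neg at hall
          obtain ⟨e, he, hce⟩ := hall
          induction e with
          | _ x y =>
            have hxy : x ≠ y := fun h => hM.ndiag _ he (by simp [h])
            rw [evs_mk, pair_count Nu x y hxy, pair_count Nv x y hxy] at hce
            have he' : s(y, x) ∈ M := by rwa [Sym2.eq_swap] at he
            by_cases h1 : x ∈ Nu <;> by_cases h2 : y ∈ Nv
            · exact swap_aux hM hu hv huv hcu hcv he h1 h2
            all_goals (
              by_cases h3 : y ∈ Nu <;> by_cases h4 : x ∈ Nv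
              all_goals first
                | (exact swap_aux hM hu hv huv hcu hcv he' h3 h4)
                | (simp [h1, h2, h3, h4] at hce)
                | (exact swap_aux hM hu hv huv hcu hcv he h1 h2))
      obtain ⟨M', hM', hMc'⟩ := hbig
      exact ih M' hM' (by omega)

end MPaux

namespace MPaux

set_option linter.unusedSectionVars false

variable {V : Type*} [DecidableEq V] [Fintype V]

lemma L1' {s : Finset V} {B : Finset (Sym2 V)} {d : ℕ}
    (hB : ∀ x ∈ s, ((s.erase x).filter (fun w => s(x, w) ∈ B)).card ≤ d)
    (heven : Even s.card) (hd : 2 * d < s.card) :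
    ∃ P, Perf s P ∧ ∀ e ∈ P, e ∉ B := by
  refine grow hB heven hd s.card ∅ ?_ (by simp)
  exact ⟨fun e he => absurd he (Finset.notMem_empty e),
    fun e he => absurd he (Finset.notMem_empty e),
    fun e he => absurd he (Finset.notMem_empty e),
    fun e he => absurd he (Finset.notMem_empty e)⟩

lemma degC_le_one {s : Finset V} {C : Finset (Sym2 V)}
    (hC : ∀ e ∈ C, ∀ e' ∈ C, e ≠ e' → ∀ v, v ∈ e → v ∉ e') (x : V) :
    ((s.erase x).filter (fun w => s(x, w) ∈ C)).card ≤ 1 := by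
  rw [Finset.card_le_one]
  intro w1 h1 w2 h2
  by_contra hne
  have hw1 := Finset.mem_filter.1 h1
  have hw2 := Finset.mem_filter.1 h2
  have hx2 : w2 ≠ x := (Finset.mem_erase.1 hw2.1).1
  have hedne : s(x, w1) ≠ s(x, w2) := by
    rw [Ne, Sym2.eq_iff]
    rintro (⟨-, h⟩ | ⟨h1', h2'⟩)
    · exact hne h
    · exact hne (h2'.trans h1')
  exact hC _ hw1.2 _ hw2.2 hedne x (by simp) (by simp)

lemma degF_le_card {s : Finset V} {F : Finset (Sym2 V)} (x : V) :
    ((s.erase x).filter (fun w => s(x, w) ∈ F)).card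
      ≤ (F.filter (fun e => x ∈ e)).card := by
  apply Finset.card_le_card_of_injOn (fun w => s(x, w))
  · intro w hw
    have hw' := Finset.mem_filter.1 hw
    exact Finset.mem_filter.2 ⟨hw'.2, by simp⟩
  · intro w1 h1 w2 h2 heq
    have hx1 : w1 ≠ x := (Finset.mem_erase.1 (Finset.mem_of_mem_filter _ h1)).1
    rcases Sym2.eq_iff.1 heq with ⟨-, h⟩ | ⟨h1', h2'⟩
    · exact h
    · exact absurd h2' hx1

lemma untouched_bound {F : Finset (Sym2 V)} (x y : V) :
    (F.filter (fun e => x ∉ e ∧ y ∉ e)).card + (F.filter (fun e => x ∈ e)).card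
      ≤ F.card := by
  rw [← Finset.card_union_of_disjoint]
  · exact Finset.card_le_card (Finset.union_subset (Finset.filter_subset _ _)
      (Finset.filter_subset _ _))
  · simp only [Finset.disjoint_left, Finset.mem_filter]
    rintro e ⟨-, hx, -⟩ ⟨-, hx'⟩
    exact hx hx'

lemma exists_partner {s : Finset V} {C F : Finset (Sym2 V)} {x : V} (hx : x ∈ s)
    (h : ((s.erase x).filter (fun w => s(x, w) ∈ C)).card
        + ((s.erase x).filter (fun w => s(x, w) ∈ F)).card < s.card - 1) :
    ∃ y ∈ s.erase x, s(x, y) ∉ C ∧ s(x, y) ∉ F := by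
  by_contra hc
  push_neg at hc
  have hsub : s.erase x ⊆ (s.erase x).filter (fun w => s(x, w) ∈ C)
      ∪ (s.erase x).filter (fun w => s(x, w) ∈ F) := by
    intro w hw
    by_cases hCm : s(x, w) ∈ C
    · exact Finset.mem_union_left _ (Finset.mem_filter.2 ⟨hw, hCm⟩)
    · exact Finset.mem_union_right _ (Finset.mem_filter.2 ⟨hw, hc w hw hCm⟩)
  have h1 := Finset.card_le_card hsub
  have h2 := Finset.card_union_le ((s.erase x).filter (fun w => s(x, w) ∈ C))
    ((s.erase x).filter (fun w => s(x, w) ∈ F))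
  rw [Finset.card_erase_of_mem hx] at h1
  omega

lemma reduce_step {s : Finset V} {x y : V} {C F P' : Finset (Sym2 V)}
    (hx : x ∈ s) (hy : y ∈ s.erase x)
    (hP' : Perf ((s.erase x).erase y) P')
    (hC1 : s(x, y) ∉ C) (hF1 : s(x, y) ∉ F)
    (hPC : ∀ e ∈ P', e ∉ C.filter (fun e => x ∉ e ∧ y ∉ e))
    (hPF : ∀ e ∈ P', e ∉ F.filter (fun e => x ∉ e ∧ y ∉ e)) :
    ∃ P, Perf s P ∧ (∀ e ∈ P, e ∉ C) ∧ (∀ e ∈ P, e ∉ F) := by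
  obtain ⟨hnd, hwi, hdi, hcover⟩ := hP'
  have hxy : x ≠ y := fun h => (Finset.mem_erase.1 hy).1 h.symm
  have hys : y ∈ s := Finset.mem_of_mem_erase hy
  have hxne : ∀ e ∈ P', x ∉ e ∧ y ∉ e := by
    intro e he
    constructor
    · intro hxe
      have := hwi e he x hxe
      exact (Finset.mem_erase.1 (Finset.mem_of_mem_erase this)).1 rfl
    · intro hye
      exact (Finset.mem_erase.1 (hwi e he y hye)).1 rfl
  refine ⟨insert s(x, y) P', ⟨?_, ?_, ?_, ?_⟩, ?_, ?_⟩
  · intro e he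
    rcases Finset.mem_insert.1 he with rfl | he
    · simp [Sym2.mk_isDiag_iff, hxy]
    · exact hnd e he
  · intro e he v hv
    rcases Finset.mem_insert.1 he with rfl | he
    · rcases Sym2.mem_iff.1 hv with rfl | rfl <;> assumption
    · exact Finset.mem_of_mem_erase (Finset.mem_of_mem_erase (hwi e he v hv))
  · intro e he e' he' hne v hv
    rcases Finset.mem_insert.1 he with rfl | he <;>
      rcases Finset.mem_insert.1 he' with rfl | he'
    · exact absurd rfl hne
    · intro hv'
      rcases Sym2.mem_iff.1 hv with h | h
      · exact (hxne e' he').1 (h ▸ hv')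
      · exact (hxne e' he').2 (h ▸ hv')
    · intro hv'
      rcases Sym2.mem_iff.1 hv' with h | h
      · exact (hxne e he).1 (h ▸ hv)
      · exact (hxne e he).2 (h ▸ hv)
    · exact hdi e he e' he' hne v hv
  · intro z hz
    by_cases hzx : z = x
    · exact ⟨s(x, y), Finset.mem_insert_self _ _, by simp [hzx]⟩
    by_cases hzy : z = y
    · exact ⟨s(x, y), Finset.mem_insert_self _ _, by simp [hzy]⟩
    · obtain ⟨e, he, hze⟩ := hcover z (Finset.mem_erase.2 ⟨hzy, Finset.mem_erase.2 ⟨hzx, hz⟩⟩)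
      exact ⟨e, Finset.mem_insert_of_mem he, hze⟩
  · intro e he
    rcases Finset.mem_insert.1 he with rfl | he
    · exact hC1
    · intro heC
      exact hPC e he (Finset.mem_filter.2 ⟨heC, hxne e he⟩)
  · intro e he
    rcases Finset.mem_insert.1 he with rfl | he
    · exact hF1
    · intro heF
      exact hPF e he (Finset.mem_filter.2 ⟨heF, hxne e he⟩)

end MPaux

namespace MPaux

set_option linter.unusedSectionVars false

variable {V : Type*} [DecidableEq V] [Fintype V]

lemma swapmem {A : Finset (Sym2 V)} {p q : V} (h : s(p, q) ∈ A) : s(q, p) ∈ A := by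
  rwa [Sym2.eq_swap] at h

lemma Cpair {C : Finset (Sym2 V)}
    (hC : ∀ e ∈ C, ∀ e' ∈ C, e ≠ e' → ∀ v, v ∈ e → v ∉ e')
    {p q t : V} (hqt : q ≠ t) (h1 : s(p, q) ∈ C) (h2 : s(p, t) ∈ C) : False := by
  have hne : s(p, q) ≠ s(p, t) := by
    rw [Ne, Sym2.eq_iff]
    rintro (⟨-, h⟩ | ⟨h1', h2'⟩)
    · exact hqt h
    · exact hqt (h2'.trans h1')
  exact hC _ h1 _ h2 hne p (by simp) (by simp)

lemma F2 {F : Finset (Sym2 V)} (hF : F.card ≤ 1) {e e' : Sym2 V}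
    (h : e ∈ F) (h' : e' ∈ F) (hne : e ≠ e') : False :=
  absurd (Finset.one_lt_card.2 ⟨e, h, e', h', hne⟩) (by omega)

lemma card_four {s : Finset V} (h : s.card = 4) :
    ∃ a b c d : V, a ≠ b ∧ a ≠ c ∧ a ≠ d ∧ b ≠ c ∧ b ≠ d ∧ c ≠ d ∧ s = {a, b, c, d} := by
  rw [show (4 : ℕ) = 3 + 1 from rfl, Finset.card_eq_succ] at h
  obtain ⟨a, t, hat, rfl, ht⟩ := h
  rw [Finset.card_eq_three] at ht
  obtain ⟨b, c, d, hbc, hbd, hcd, rfl⟩ := ht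
  refine ⟨a, b, c, d, ?_, ?_, ?_, hbc, hbd, hcd, rfl⟩ <;>
    (intro h; apply hat; simp [h])

lemma perf2 {a b c d : V} (hab : a ≠ b) (hac : a ≠ c) (had : a ≠ d)
    (hbc : b ≠ c) (hbd : b ≠ d) (hcd : c ≠ d) :
    Perf ({a, b, c, d} : Finset V) {s(a, b), s(c, d)} := by
  refine ⟨?_, ?_, ?_, ?_⟩
  · intro e he
    rcases Finset.mem_insert.1 he with rfl | he
    · simp [Sym2.mk_isDiag_iff, hab]
    · rw [Finset.mem_singleton] at he; subst he; simp [Sym2.mk_isDiag_iff, hcd]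
  · intro e he v hv
    rcases Finset.mem_insert.1 he with rfl | he
    · rcases Sym2.mem_iff.1 hv with rfl | rfl <;> simp
    · rw [Finset.mem_singleton] at he; subst he
      rcases Sym2.mem_iff.1 hv with rfl | rfl <;> simp
  · intro e he e' he' hne' v hv hv'
    rcases Finset.mem_insert.1 he with rfl | he <;>
      rcases Finset.mem_insert.1 he' with rfl | he'
    · exact hne' rfl
    · rw [Finset.mem_singleton] at he'; subst he'
      rcases Sym2.mem_iff.1 hv with h | h <;> rcases Sym2.mem_iff.1 hv' with h' | h'
      · exact hac (h.symm.trans h')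
      · exact had (h.symm.trans h')
      · exact hbc (h.symm.trans h')
      · exact hbd (h.symm.trans h')
    · rw [Finset.mem_singleton] at he; subst he
      rcases Sym2.mem_iff.1 hv with h | h <;> rcases Sym2.mem_iff.1 hv' with h' | h'
      · exact hac (h'.symm.trans h)
      · exact hbc (h'.symm.trans h)
      · exact had (h'.symm.trans h)
      · exact hbd (h'.symm.trans h)
    · rw [Finset.mem_singleton] at he; subst he
      rw [Finset.mem_singleton] at he'; subst he'
      exact hne' rfl
  · intro z hz
    simp only [Finset.mem_insert, Finset.mem_singleton] at hz
    rcases hz with rfl | rfl | rfl | rfl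
    · exact ⟨s(z, b), by simp, by simp⟩
    · exact ⟨s(a, z), by simp, by simp⟩
    · exact ⟨s(z, d), by simp [Finset.mem_insert], by simp⟩
    · exact ⟨s(c, z), by simp [Finset.mem_insert], by simp⟩

lemma neq_mk {V : Type*} {p q r t : V} (h1 : ¬(p = r ∧ q = t)) (h2 : ¬(p = t ∧ q = r)) :
    s(p, q) ≠ s(r, t) := by
  rw [Ne, Sym2.eq_iff]; tauto

set_option maxHeartbeats 2000000 in
lemma base4 {s : Finset V} (h4 : s.card = 4) (C F : Finset (Sym2 V))
    (hC : ∀ e ∈ C, ∀ e' ∈ C, e ≠ e' → ∀ v, v ∈ e → v ∉ e')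
    (hF : F.card ≤ 1) :
    ∃ P, Perf s P ∧ (∀ e ∈ P, e ∉ C) ∧ (∀ e ∈ P, e ∉ F) := by
  obtain ⟨a, b, c, d, hab, hac, had, hbc, hbd, hcd, rfl⟩ := card_four h4
  have avoidP : ∀ e1 e2 : Sym2 V, e1 ∉ C → e1 ∉ F → e2 ∉ C → e2 ∉ F →
      (∀ e ∈ ({e1, e2} : Finset (Sym2 V)), e ∉ C) ∧
      (∀ e ∈ ({e1, e2} : Finset (Sym2 V)), e ∉ F) := by
    intro e1 e2 h1 h2 h3 h4'
    constructor <;>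
      (intro e he
       rcases Finset.mem_insert.1 he with rfl | he
       · assumption
       · rw [Finset.mem_singleton] at he; subst he; assumption)
  by_cases hP1 : s(a, b) ∉ C ∧ s(a, b) ∉ F ∧ s(c, d) ∉ C ∧ s(c, d) ∉ F
  · obtain ⟨q1, q2⟩ := avoidP _ _ hP1.1 hP1.2.1 hP1.2.2.1 hP1.2.2.2
    exact ⟨_, perf2 hab hac had hbc hbd hcd, q1, q2⟩
  by_cases hP2 : s(a, c) ∉ C ∧ s(a, c) ∉ F ∧ s(b, d) ∉ C ∧ s(b, d) ∉ F
  · obtain ⟨q1, q2⟩ := avoidP _ _ hP2.1 hP2.2.1 hP2.2.2.1 hP2.2.2.2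
    have hperm : ({a, b, c, d} : Finset V) = {a, c, b, d} := by
      ext z; simp only [Finset.mem_insert, Finset.mem_singleton]; tauto
    rw [hperm]
    exact ⟨_, perf2 hac hab had hbc.symm hcd hbd, q1, q2⟩
  by_cases hP3 : s(a, d) ∉ C ∧ s(a, d) ∉ F ∧ s(b, c) ∉ C ∧ s(b, c) ∉ F
  · obtain ⟨q1, q2⟩ := avoidP _ _ hP3.1 hP3.2.1 hP3.2.2.1 hP3.2.2.2
    have hperm : ({a, b, c, d} : Finset V) = {a, d, b, c} := by
      ext z; simp only [Finset.mem_insert, Finset.mem_singleton]; tauto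
    rw [hperm]
    exact ⟨_, perf2 had hab hac hbd.symm hcd.symm hbc, q1, q2⟩
  exfalso
  have h1 : (s(a, b) ∈ C ∨ s(a, b) ∈ F) ∨ (s(c, d) ∈ C ∨ s(c, d) ∈ F) := by
    by_contra hq
    push_neg at hq
    exact hP1 ⟨hq.1.1, hq.1.2, hq.2.1, hq.2.2⟩
  have h2 : (s(a, c) ∈ C ∨ s(a, c) ∈ F) ∨ (s(b, d) ∈ C ∨ s(b, d) ∈ F) := by
    by_contra hq
    push_neg at hq
    exact hP2 ⟨hq.1.1, hq.1.2, hq.2.1, hq.2.2⟩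
  have h3 : (s(a, d) ∈ C ∨ s(a, d) ∈ F) ∨ (s(b, c) ∈ C ∨ s(b, c) ∈ F) := by
    by_contra hq
    push_neg at hq
    exact hP3 ⟨hq.1.1, hq.1.2, hq.2.1, hq.2.2⟩
  have nf1 : s(a, b) ≠ s(a, c) := neq_mk (fun h => hbc h.2) (fun h => hac h.1)
  have nf2 : s(a, b) ≠ s(b, d) := neq_mk (fun h => hab h.1) (fun h => had h.1)
  have nf3 : s(c, d) ≠ s(a, c) := neq_mk (fun h => hac h.1.symm) (fun h => had h.2.symm)
  have nf4 : s(c, d) ≠ s(b, d) := neq_mk (fun h => hbc h.1.symm) (fun h => hcd h.1)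
  have nf5 : s(a, b) ≠ s(a, d) := neq_mk (fun h => hbd h.2) (fun h => had h.1)
  have nf6 : s(a, b) ≠ s(b, c) := neq_mk (fun h => hab h.1) (fun h => hac h.1)
  have nf7 : s(c, d) ≠ s(a, d) := neq_mk (fun h => hac h.1.symm) (fun h => hcd h.1)
  have nf8 : s(c, d) ≠ s(b, c) := neq_mk (fun h => hbc h.1.symm) (fun h => hbd h.2.symm)
  have nf9 : s(a, c) ≠ s(a, d) := neq_mk (fun h => hcd h.2) (fun h => had h.1)
  have nf10 : s(a, c) ≠ s(b, c) := neq_mk (fun h => hab h.1) (fun h => hac h.1)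
  have nf11 : s(b, d) ≠ s(a, d) := neq_mk (fun h => hab h.1.symm) (fun h => hbd h.1)
  have nf12 : s(b, d) ≠ s(b, c) := neq_mk (fun h => hcd h.2.symm) (fun h => hbc h.1)
  rcases h1 with (hm1 | hm1) | (hm1 | hm1) <;>
    rcases h2 with (hm2 | hm2) | (hm2 | hm2) <;>
    rcases h3 with (hm3 | hm3) | (hm3 | hm3) <;>
    first
      | exact Cpair hC hbc hm1 hm2
      | exact Cpair hC had (swapmem hm1) hm2
      | exact Cpair hC had.symm hm1 (swapmem hm2)
      | exact Cpair hC hbc.symm (swapmem hm1) (swapmem hm2)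
      | exact Cpair hC hbd hm1 hm3
      | exact Cpair hC hac (swapmem hm1) hm3
      | exact Cpair hC hac.symm (swapmem hm1) (swapmem hm3)
      | exact Cpair hC hbd.symm hm1 (swapmem hm3)
      | exact Cpair hC hcd hm2 hm3
      | exact Cpair hC hab (swapmem hm2) (swapmem hm3)
      | exact Cpair hC hab.symm (swapmem hm2) (swapmem hm3)
      | exact Cpair hC hcd.symm hm2 hm3
      | exact F2 hF hm1 hm2 nf1
      | exact F2 hF hm1 hm2 nf2
      | exact F2 hF hm1 hm2 nf3
      | exact F2 hF hm1 hm2 nf4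
      | exact F2 hF hm1 hm3 nf5
      | exact F2 hF hm1 hm3 nf6
      | exact F2 hF hm1 hm3 nf7
      | exact F2 hF hm1 hm3 nf8
      | exact F2 hF hm2 hm3 nf9
      | exact F2 hF hm2 hm3 nf10
      | exact F2 hF hm2 hm3 nf11
      | exact F2 hF hm2 hm3 nf12

end MPaux

namespace MPaux

set_option linter.unusedSectionVars false

variable {V : Type*} [DecidableEq V] [Fintype V]

lemma lemGL : ∀ (n : ℕ) (s : Finset V), s.card = n → Even n → 4 ≤ n →
    ∀ C F : Finset (Sym2 V),
    (∀ e ∈ C, ∀ e' ∈ C, e ≠ e' → ∀ v, v ∈ e → v ∉ e') →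
    F.card + 3 ≤ n →
    ∃ P, Perf s P ∧ (∀ e ∈ P, e ∉ C) ∧ (∀ e ∈ P, e ∉ F) := by
  intro n
  induction n using Nat.strong_induction_on with
  | _ n ih =>
  intro s hs he h4 C F hC hF
  by_cases h4' : n = 4
  · exact base4 (by omega) C F hC (by omega)
  have h6 : 6 ≤ n := by rcases he with ⟨m, hm⟩; omega
  by_cases hred : ∃ x ∈ s,
      F.card ≤ (n - 5) + ((s.erase x).filter (fun w => s(x, w) ∈ F)).card
  · obtain ⟨x, hxs, hx⟩ := hred
    have hdC := degC_le_one (s := s) hC x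
    have hdF : ((s.erase x).filter (fun w => s(x, w) ∈ F)).card ≤ F.card :=
      le_trans (degF_le_card x) (Finset.card_le_card (Finset.filter_subset _ _))
    obtain ⟨y, hy, hyC, hyF⟩ := exists_partner (C := C) (F := F) hxs (by omega)
    have hcards' : ((s.erase x).erase y).card = n - 2 := by
      rw [Finset.card_erase_of_mem hy, Finset.card_erase_of_mem hxs, hs]
      omega
    have htouch := untouched_bound (F := F) x y
    have hdF2 := degF_le_card (s := s) (F := F) x
    obtain ⟨P', hP', hPC, hPF⟩ := ih (n - 2) (by omega) _ hcards'
      (by rcases he with ⟨m, hm⟩; exact ⟨m - 1, by omega⟩) (by omega)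
      (C.filter (fun e => x ∉ e ∧ y ∉ e)) (F.filter (fun e => x ∉ e ∧ y ∉ e))
      (fun e he' e' he'' => hC e (Finset.mem_of_mem_filter _ he') e'
        (Finset.mem_of_mem_filter _ he''))
      (by omega)
    exact reduce_step hxs hy hP' hyC hyF hPC hPF
  · push_neg at hred
    have hdeg : ∀ x ∈ s, ((s.erase x).filter (fun w => s(x, w) ∈ C ∪ F)).card ≤ 2 := by
      intro x hxs
      have h1 := degC_le_one (s := s) hC x
      have h2 := hred x hxs
      have hsplit : (s.erase x).filter (fun w => s(x, w) ∈ C ∪ F)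
          = (s.erase x).filter (fun w => s(x, w) ∈ C)
            ∪ (s.erase x).filter (fun w => s(x, w) ∈ F) := by
        ext w
        simp only [Finset.mem_filter, Finset.mem_union]
        tauto
      rw [hsplit]
      have h3 := Finset.card_union_le ((s.erase x).filter (fun w => s(x, w) ∈ C))
        ((s.erase x).filter (fun w => s(x, w) ∈ F))
      omega
    obtain ⟨P, hP, hPB⟩ := L1' hdeg (hs ▸ he) (by omega)
    exact ⟨P, hP, fun e heP hc => hPB e heP (Finset.mem_union_left _ hc),
      fun e heP hf => hPB e heP (Finset.mem_union_right _ hf)⟩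

lemma lemVL : ∀ (n : ℕ) (s : Finset V), s.card = n → Even n →
    ∀ F : Finset (Sym2 V), (F.card + 2 ≤ n ∨ n = 0) →
    ∃ P, Perf s P ∧ (∀ e ∈ P, e ∉ F) := by
  intro n
  induction n using Nat.strong_induction_on with
  | _ n ih =>
  intro s hs he F hF
  rcases hF with hF | rfl
  · have hn2 : 2 ≤ n := by omega
    by_cases hred : ∃ x ∈ s,
        F.card ≤ (n - 4) + ((s.erase x).filter (fun w => s(x, w) ∈ F)).card
    · obtain ⟨x, hxs, hx⟩ := hred
      have hdC : ((s.erase x).filter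
          (fun w => s(x, w) ∈ (∅ : Finset (Sym2 V)))).card = 0 := by simp
      have hdF : ((s.erase x).filter (fun w => s(x, w) ∈ F)).card ≤ F.card :=
        le_trans (degF_le_card x) (Finset.card_le_card (Finset.filter_subset _ _))
      obtain ⟨y, hy, -, hyF⟩ := exists_partner (C := (∅ : Finset (Sym2 V))) (F := F) hxs (by omega)
      have hcards' : ((s.erase x).erase y).card = n - 2 := by
        rw [Finset.card_erase_of_mem hy, Finset.card_erase_of_mem hxs, hs]
        omega
      have htouch := untouched_bound (F := F) x y
      have hdF2 := degF_le_card (s := s) (F := F) x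
      obtain ⟨m, hm⟩ := he
      obtain ⟨P', hP', hPF⟩ := ih (n - 2) (by omega) _ hcards'
        ⟨m - 1, by omega⟩
        (F.filter (fun e => x ∉ e ∧ y ∉ e)) (by omega)
      obtain ⟨P, hP, -, hPF'⟩ := reduce_step (C := (∅ : Finset (Sym2 V))) hxs hy hP'
        (Finset.notMem_empty _) hyF
        (fun e he' hc => absurd (Finset.mem_of_mem_filter _ hc) (Finset.notMem_empty e))
        hPF
      exact ⟨P, hP, hPF'⟩
    · push_neg at hred
      obtain ⟨x0, hx0⟩ := Finset.card_pos.1 (by omega : 0 < s.card)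
      have h0 := hred x0 hx0
      have h4 : 4 ≤ n := by rcases he with ⟨m, hm⟩; omega
      have hdeg : ∀ x ∈ s, ((s.erase x).filter (fun w => s(x, w) ∈ F)).card ≤ 1 := by
        intro x hxs
        have := hred x hxs
        omega
      obtain ⟨P, hP, hPB⟩ := L1' hdeg (hs ▸ he) (by omega)
      exact ⟨P, hP, hPB⟩
  · have hse : s = ∅ := Finset.card_eq_zero.1 hs
    subst hse
    exact ⟨∅, ⟨fun e he' => absurd he' (Finset.notMem_empty e),
      fun e he' => absurd he' (Finset.notMem_empty e),
      fun e he' => absurd he' (Finset.notMem_empty e),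
      fun x hx => absurd hx (Finset.notMem_empty x)⟩,
      fun e he' => absurd he' (Finset.notMem_empty e)⟩

end MPaux

section Glue

open MPaux

variable {V : Type*} [Fintype V]

/-- Build a perfect matching subgraph from a `Perf` finset. -/
lemma perf_to_pm [DecidableEq V] {G' : SimpleGraph V} {P : Finset (Sym2 V)}
    (hP : Perf Finset.univ P) (hPE : ∀ e ∈ P, e ∈ G'.edgeSet) :
    ∃ M : G'.Subgraph, M.IsPerfectMatching := by
  obtain ⟨hnd, -, hdi, hcover⟩ := hP
  refine ⟨⟨Set.univ, fun x y => s(x, y) ∈ P, fun {x y} h => ?_, fun {x y} h => trivial,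
    ⟨fun x y h => by
      have h' : s(x, y) ∈ P := h
      show s(y, x) ∈ P
      rwa [Sym2.eq_swap] at h'⟩⟩, ?_, fun v => trivial⟩
  · exact (SimpleGraph.mem_edgeSet G').1 (hPE _ h)
  · intro v hv
    obtain ⟨e, heP, hve⟩ := hcover v (Finset.mem_univ v)
    obtain ⟨w, rfl⟩ := Sym2.mem_iff_exists.1 hve
    refine ⟨w, heP, ?_⟩
    intro w' hw'
    have heq : s(v, w') = s(v, w) := by
      by_contra hne
      exact hdi _ hw' _ heP hne v (by simp) (by simp)
    rcases Sym2.eq_iff.1 heq with ⟨-, h⟩ | ⟨h1, h2⟩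
    · exact h
    · exact h2.trans h1

/-- With evenly many vertices there is no almost-perfect matching. -/
lemma no_apm (hev : Even (Fintype.card V)) {G' : SimpleGraph V}
    {M : G'.Subgraph} (h : M.IsAlmostPerfectMatching) : False := by
  classical
  obtain ⟨hm, v, hver⟩ := h
  haveI : Fintype M.verts := Set.Finite.fintype (Set.toFinite _)
  have hcard := SimpleGraph.Subgraph.IsMatching.even_card hm
  have hvc : M.verts.toFinset.card = Fintype.card V - 1 := by
    rw [Set.toFinset_congr hver, Set.toFinset_compl, Set.toFinset_singleton,
      Finset.card_compl, Finset.card_singleton]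
  rw [hvc] at hcard
  have h1 : 1 ≤ Fintype.card V := Fintype.card_pos_iff.2 ⟨v⟩
  obtain ⟨m1, hm1⟩ := hev
  obtain ⟨m2, hm2⟩ := hcard
  omega

lemma kill_vertex (G : SimpleGraph V) [DecidableRel G.Adj] [DecidableEq V]
    (hev : Even (Fintype.card V)) (v : V) :
    ¬ (G.deleteEdges ↑(G.incidenceFinset v)).HasGoodMatching := by
  rintro (⟨M, hM⟩ | ⟨M, hM⟩)
  · obtain ⟨w, hw, -⟩ := hM.1 (hM.2 v)
    have hadj := M.adj_sub hw
    rw [SimpleGraph.deleteEdges_adj] at hadj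
    exact hadj.2 (by
      rw [Finset.mem_coe, SimpleGraph.mem_incidenceFinset]
      exact ⟨(SimpleGraph.mem_edgeSet G).2 hadj.1, by simp⟩)
  · exact no_apm hev hM

lemma mem_mp_set (G : SimpleGraph V) [DecidableRel G.Adj]
    (hev : Even (Fintype.card V)) (v : V) :
    G.degree v ∈ { k | ∃ F : Finset (Sym2 V), ↑F ⊆ G.edgeSet ∧ F.card = k ∧
      ¬ (G.deleteEdges ↑F).HasGoodMatching } := by
  classical
  refine ⟨G.incidenceFinset v, ?_, ?_, kill_vertex G hev v⟩
  · intro e he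
    exact G.incidenceSet_subset v ((G.mem_incidenceFinset v e).1 he)
  · exact G.card_incidenceFinset_eq_degree v

lemma pm_of_del (G : SimpleGraph V) [DecidableRel G.Adj]
    (hev : Even (Fintype.card V)) (h4 : 4 ≤ Fintype.card V)
    (hdeg : ∀ v, Fintype.card V - 2 ≤ G.degree v)
    (F : Finset (Sym2 V)) (hFc : F.card + 3 ≤ Fintype.card V) :
    (G.deleteEdges ↑F).HasGoodMatching := by
  classical
  set C : Finset (Sym2 V) := Gᶜ.edgeFinset with hCdef
  have hCmatch : ∀ e ∈ C, ∀ e' ∈ C, e ≠ e' → ∀ w, w ∈ e → w ∉ e' := by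
    intro e he e' he' hne w hwe hwe'
    have he2 := SimpleGraph.mem_edgeFinset.1 he
    have he2' := SimpleGraph.mem_edgeFinset.1 he'
    obtain ⟨a, rfl⟩ := Sym2.mem_iff_exists.1 hwe
    obtain ⟨b, rfl⟩ := Sym2.mem_iff_exists.1 hwe'
    rw [SimpleGraph.mem_edgeSet, SimpleGraph.compl_adj] at he2 he2'
    have hab : a ≠ b := fun h => hne (by rw [h])
    have hsub : G.neighborFinset w ⊆ ((Finset.univ.erase w).erase a).erase b := by
      intro z hz
      rw [SimpleGraph.mem_neighborFinset] at hz
      refine Finset.mem_erase.2 ⟨fun h => he2'.2 (h ▸ hz), Finset.mem_erase.2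
        ⟨fun h => he2.2 (h ▸ hz), Finset.mem_erase.2 ⟨fun h => (h ▸ hz).ne rfl, Finset.mem_univ z⟩⟩⟩
    have hc := Finset.card_le_card hsub
    have hc2 : (((Finset.univ.erase w).erase a).erase b).card
        = Fintype.card V - 3 := by
      rw [Finset.card_erase_of_mem, Finset.card_erase_of_mem, Finset.card_erase_of_mem,
        Finset.card_univ]
      · omega
      · exact Finset.mem_univ w
      · exact Finset.mem_erase.2 ⟨he2.1.symm, Finset.mem_univ a⟩
      · exact Finset.mem_erase.2 ⟨hab.symm, Finset.mem_erase.2 ⟨he2'.1.symm, Finset.mem_univ b⟩⟩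
    have := hdeg w
    rw [← SimpleGraph.card_neighborFinset_eq_degree] at this
    omega
  obtain ⟨P, hP, hPC, hPF⟩ := lemGL (Fintype.card V) Finset.univ (Finset.card_univ)
    hev h4 C F hCmatch hFc
  left
  apply perf_to_pm hP
  intro e heP
  have hnd := hP.1 e heP
  induction e with
  | _ x y =>
    have hxy : x ≠ y := fun h => hnd (by simp [h])
    rw [SimpleGraph.mem_edgeSet, SimpleGraph.deleteEdges_adj]
    constructor
    · by_contra hGadj
      exact hPC _ heP (SimpleGraph.mem_edgeFinset.2
        ((SimpleGraph.mem_edgeSet Gᶜ).2 ⟨hxy, hGadj⟩))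
    · exact fun hmem => hPF _ heP hmem

end Glue

theorem stmt9 {V : Type*} [Fintype V] (G : SimpleGraph V) [DecidableRel G.Adj]
    (hn : Even (Fintype.card V)) (h4 : 4 ≤ Fintype.card V) :
    G.mp = Fintype.card V - 2 ↔ G.minDegree = Fintype.card V - 2 := by
  classical
  haveI : Nonempty V := Fintype.card_pos_iff.1 (by omega)
  set n := Fintype.card V with hn_def
  set S := { k | ∃ F : Finset (Sym2 V), ↑F ⊆ G.edgeSet ∧ F.card = k ∧
    ¬ (G.deleteEdges ↑F).HasGoodMatching } with hS_def
  have hmp_def : G.mp = sInf S := rfl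
  constructor
  · intro hmp
    by_contra hne
    obtain ⟨v, hv⟩ := G.exists_minimal_degree_vertex
    have hlt : G.degree v < n := G.degree_lt_card_verts v
    have hle : G.minDegree ≤ n - 1 := by omega
    rcases (by omega : G.minDegree ≤ n - 3 ∨ G.minDegree = n - 1) with hsmall | hbig
    · -- small min degree: mp ≤ n-3
      have hmem : G.degree v ∈ S := mem_mp_set G hn v
      have : sInf S ≤ G.degree v := Nat.sInf_le hmem
      omega
    · -- G is complete
      have hadj : ∀ x y : V, x ≠ y → G.Adj x y := by
        intro x y hxy
        have hdx : n - 1 ≤ G.degree x := hbig ▸ G.minDegree_le_degree x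
        have hsub : G.neighborFinset x ⊆ Finset.univ.erase x := by
          intro z hz
          rw [SimpleGraph.mem_neighborFinset] at hz
          exact Finset.mem_erase.2 ⟨fun h => (h ▸ hz).ne rfl, Finset.mem_univ z⟩
        have hcard : (Finset.univ.erase x).card = n - 1 := by
          rw [Finset.card_erase_of_mem (Finset.mem_univ x), Finset.card_univ]
        have hEq : G.neighborFinset x = Finset.univ.erase x := by
          apply Finset.eq_of_subset_of_card_le hsub
          rw [hcard, SimpleGraph.card_neighborFinset_eq_degree]
          exact hdx
        have : y ∈ G.neighborFinset x := by
          rw [hEq]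
          exact Finset.mem_erase.2 ⟨hxy.symm, Finset.mem_univ y⟩
        rwa [SimpleGraph.mem_neighborFinset] at this
      have hSne : S.Nonempty := by
        by_contra h
        rw [Set.not_nonempty_iff_eq_empty] at h
        rw [hmp_def, h, Nat.sInf_empty] at hmp
        omega
      have hmem : n - 2 ∈ S := by
        have := Nat.sInf_mem hSne
        rwa [← hmp_def, hmp] at this
      obtain ⟨F, hFsub, hFcard, hbad⟩ := hmem
      apply hbad
      obtain ⟨P, hP, hPF⟩ := MPaux.lemVL n Finset.univ Finset.card_univ hn F (by omega)
      left
      apply perf_to_pm hP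
      intro e heP
      have hnd := hP.1 e heP
      induction e with
      | _ x y =>
        have hxy : x ≠ y := fun h => hnd (by simp [h])
        rw [SimpleGraph.mem_edgeSet, SimpleGraph.deleteEdges_adj]
        exact ⟨hadj x y hxy, fun hmem => hPF _ heP hmem⟩
  · intro hδ
    have hdeg : ∀ v, n - 2 ≤ G.degree v := fun v => hδ ▸ G.minDegree_le_degree v
    obtain ⟨v, hv⟩ := G.exists_minimal_degree_vertex
    have hmem : n - 2 ∈ S := by
      have := mem_mp_set G hn v
      rwa [← hv, hδ] at this
    have hlow : ∀ k ∈ S, n - 2 ≤ k := by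
      intro k hk
      obtain ⟨F, hFsub, hFcard, hbad⟩ := hk
      by_contra hlt
      exact hbad (pm_of_del G hn h4 hdeg F (by omega))
    rw [hmp_def]
    exact le_antisymm (Nat.sInf_le hmem) (le_csInf ⟨_, hmem⟩ hlow)
end

section
/- Let G be a graph with an odd number n ≥ 9 of vertices. Then mp(G) = 2n − 3 if and only if G is the complete graph K_n. -/
open SimpleGraph

section Main
variable {V : Type*} [DecidableEq V]

/-- matchings as finsets of ordered pairs -/
def Good (F : Finset (Sym2 V)) (M : Finset (V × V)) : Prop :=
  (∀ p ∈ M, p.1 ≠ p.2 ∧ s(p.1, p.2) ∉ F) ∧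
  (∀ p ∈ M, ∀ q ∈ M, p ≠ q → p.1 ≠ q.1 ∧ p.1 ≠ q.2 ∧ p.2 ≠ q.1 ∧ p.2 ≠ q.2)

def cov (M : Finset (V × V)) : Finset V := M.biUnion fun p => {p.1, p.2}

lemma mem_cov {M : Finset (V × V)} {v : V} :
    v ∈ cov M ↔ ∃ p ∈ M, v = p.1 ∨ v = p.2 := by
  simp [cov]

omit [DecidableEq V] in
lemma good_mono {F : Finset (Sym2 V)} {M M' : Finset (V × V)} (h : M' ⊆ M)
    (hM : Good F M) : Good F M' :=
  ⟨fun p hp => hM.1 p (h hp), fun p hp q hq => hM.2 p (h hp) q (h hq)⟩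

lemma cov_mono {M M' : Finset (V × V)} (h : M' ⊆ M) : cov M' ⊆ cov M := by
  intro v hv; rw [mem_cov] at *; obtain ⟨p, hp, h2⟩ := hv; exact ⟨p, h hp, h2⟩

lemma notmem_cov_erase {F : Finset (Sym2 V)} {M : Finset (V × V)} (hM : Good F M)
    {p : V × V} (hp : p ∈ M) {v : V} (hv : v = p.1 ∨ v = p.2) :
    v ∉ cov (M.erase p) := by
  intro hmem
  rw [mem_cov] at hmem
  obtain ⟨q, hq, h2⟩ := hmem
  have hqM := Finset.mem_of_mem_erase hq
  have hne : q ≠ p := Finset.ne_of_mem_erase hq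
  obtain ⟨t1, t2, t3, t4⟩ := hM.2 q hqM p hp hne
  rcases h2 with h2 | h2 <;> rcases hv with hv | hv
  · exact t1 (h2.symm.trans hv)
  · exact t2 (h2.symm.trans hv)
  · exact t3 (h2.symm.trans hv)
  · exact t4 (h2.symm.trans hv)

lemma good_insert {F : Finset (Sym2 V)} {M : Finset (V × V)} (hM : Good F M)
    {a b : V} (hab : a ≠ b) (hF : s(a, b) ∉ F)
    (ha : a ∉ cov M) (hb : b ∉ cov M) :
    Good F (insert (a, b) M) ∧ cov (insert (a, b) M) = insert a (insert b (cov M)) ∧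
      (insert (a, b) M).card = M.card + 1 := by
  have habM : (a, b) ∉ M := by
    intro h; exact ha (mem_cov.2 ⟨(a, b), h, Or.inl rfl⟩)
  refine ⟨⟨?_, ?_⟩, ?_, ?_⟩
  · intro p hp
    rcases Finset.mem_insert.1 hp with h | h
    · subst h; exact ⟨hab, hF⟩
    · exact hM.1 p h
  · intro p hp q hq hne
    rcases Finset.mem_insert.1 hp with h | h <;> rcases Finset.mem_insert.1 hq with h' | h'
    · exact absurd (h.trans h'.symm) hne
    · subst h
      have h1 : q.1 ∈ cov M := mem_cov.2 ⟨q, h', Or.inl rfl⟩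
      have h2 : q.2 ∈ cov M := mem_cov.2 ⟨q, h', Or.inr rfl⟩
      refine ⟨?_, ?_, ?_, ?_⟩ <;> dsimp only <;> rintro rfl
      exacts [ha h1, ha h2, hb h1, hb h2]
    · subst h'
      have h1 : p.1 ∈ cov M := mem_cov.2 ⟨p, h, Or.inl rfl⟩
      have h2 : p.2 ∈ cov M := mem_cov.2 ⟨p, h, Or.inr rfl⟩
      refine ⟨?_, ?_, ?_, ?_⟩ <;> dsimp only <;> rintro rfl
      exacts [ha h1, hb h1, ha h2, hb h2]
    · exact hM.2 p h q h' hne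
  · ext v
    simp only [cov, Finset.mem_biUnion, Finset.mem_insert, Finset.mem_singleton]
    constructor
    · rintro ⟨p, hp | hp, h⟩
      · subst hp; rcases h with h | h
        · exact Or.inl h
        · exact Or.inr (Or.inl h)
      · exact Or.inr (Or.inr ⟨p, hp, h⟩)
    · rintro (h | h | ⟨p, hp, h⟩)
      · exact ⟨(a, b), Or.inl rfl, Or.inl h⟩
      · exact ⟨(a, b), Or.inl rfl, Or.inr h⟩
      · exact ⟨p, Or.inr hp, h⟩
  · exact Finset.card_insert_of_notMem habM
def MaxGood (F : Finset (Sym2 V)) (M : Finset (V × V)) : Prop :=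
  Good F M ∧ ∀ M', Good F M' → M'.card ≤ M.card

omit [DecidableEq V] in
lemma exists_maxgood [Fintype V] (F : Finset (Sym2 V)) : ∃ M, MaxGood F M := by
  classical
  obtain ⟨M, hM, hmax⟩ := Finset.exists_max_image
    ((Finset.univ : Finset (Finset (V × V))).filter (fun M => Good F M)) Finset.card
    ⟨∅, by simp [Good]⟩
  refine ⟨M, (Finset.mem_filter.1 hM).2, fun M' hM' => ?_⟩
  exact hmax M' (Finset.mem_filter.2 ⟨Finset.mem_univ _, hM'⟩)

lemma mem_cov_of_pair {M : Finset (V × V)} {p : V × V} {v : V} (hp : p ∈ M)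
    (hv : v = p.1 ∨ v = p.2) : v ∈ cov M := mem_cov.2 ⟨p, hp, hv⟩

/-- length-1 augmenting path -/
lemma L1 {F : Finset (Sym2 V)} {M : Finset (V × V)} (hM : MaxGood F M)
    {x y : V} (hxy : x ≠ y) (hx : x ∉ cov M) (hy : y ∉ cov M) : s(x, y) ∈ F := by
  by_contra hF
  obtain ⟨hg, _, hcard⟩ := good_insert hM.1 hxy hF hx hy
  have := hM.2 _ hg
  omega

/-- length-3 augmenting path -/
lemma L3 {F : Finset (Sym2 V)} {M : Finset (V × V)} (hM : MaxGood F M)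
    {p : V × V} (hp : p ∈ M) {a b x y : V}
    (hab : (a, b) = p ∨ (b, a) = p)
    (hxy : x ≠ y) (hx : x ∉ cov M) (hy : y ∉ cov M)
    (h1 : s(x, a) ∉ F) (h2 : s(y, b) ∉ F) : False := by
  have haP : a = p.1 ∨ a = p.2 := by rcases hab with h | h <;> subst h <;> simp
  have hbP : b = p.1 ∨ b = p.2 := by rcases hab with h | h <;> subst h <;> simp
  have hab' : a ≠ b := by
    have := (hM.1.1 p hp).1
    rcases hab with h | h <;> subst h <;> simpa [eq_comm] using this
  have haM : a ∈ cov M := mem_cov_of_pair hp haP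
  have hbM : b ∈ cov M := mem_cov_of_pair hp hbP
  set M₀ := M.erase p with hM₀
  have hg₀ : Good F M₀ := good_mono (Finset.erase_subset _ _) hM.1
  have ha₀ : a ∉ cov M₀ := notmem_cov_erase hM.1 hp haP
  have hb₀ : b ∉ cov M₀ := notmem_cov_erase hM.1 hp hbP
  have hx₀ : x ∉ cov M₀ := fun h => hx (cov_mono (Finset.erase_subset _ _) h)
  have hy₀ : y ∉ cov M₀ := fun h => hy (cov_mono (Finset.erase_subset _ _) h)
  have hyb : y ≠ b := fun h => hy (h ▸ hbM)
  obtain ⟨hg₁, hcov₁, hcard₁⟩ := good_insert hg₀ hyb h2 hy₀ hb₀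
  have hxa : x ≠ a := fun h => hx (h ▸ haM)
  have hx₁ : x ∉ cov (insert (y, b) M₀) := by
    rw [hcov₁]
    simp only [Finset.mem_insert]
    push_neg
    exact ⟨hxy, fun h => hx (h ▸ hbM), hx₀⟩
  have ha₁ : a ∉ cov (insert (y, b) M₀) := by
    rw [hcov₁]
    simp only [Finset.mem_insert]
    push_neg
    exact ⟨fun h => hy (h ▸ haM), hab', ha₀⟩
  obtain ⟨hg₂, _, hcard₂⟩ := good_insert hg₁ hxa h1 hx₁ ha₁
  have hle := hM.2 _ hg₂
  have hc : M₀.card = M.card - 1 := Finset.card_erase_of_mem hp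
  have hpos : 0 < M.card := Finset.card_pos.2 ⟨p, hp⟩
  omega

/-- length-5 augmenting path -/
lemma L5 {F : Finset (Sym2 V)} {M : Finset (V × V)} (hM : MaxGood F M)
    {p q : V × V} (hp : p ∈ M) (hq : q ∈ M) (hpq : p ≠ q) {a b c d x y : V}
    (hab : (a, b) = p ∨ (b, a) = p) (hcd : (c, d) = q ∨ (d, c) = q)
    (hxy : x ≠ y) (hx : x ∉ cov M) (hy : y ∉ cov M)
    (h1 : s(x, b) ∉ F) (h2 : s(a, c) ∉ F) (h3 : s(d, y) ∉ F) : False := by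
  have haP : a = p.1 ∨ a = p.2 := by rcases hab with h | h <;> subst h <;> simp
  have hbP : b = p.1 ∨ b = p.2 := by rcases hab with h | h <;> subst h <;> simp
  have hcP : c = q.1 ∨ c = q.2 := by rcases hcd with h | h <;> subst h <;> simp
  have hdP : d = q.1 ∨ d = q.2 := by rcases hcd with h | h <;> subst h <;> simp
  have hab' : a ≠ b := by
    have := (hM.1.1 p hp).1
    rcases hab with h | h <;> subst h <;> simpa [eq_comm] using this
  have hcd' : c ≠ d := by
    have := (hM.1.1 q hq).1
    rcases hcd with h | h <;> subst h <;> simpa [eq_comm] using this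
  have hdisj := hM.1.2 p hp q hq hpq
  have hac : a ≠ c := by
    rcases haP with h | h <;> rcases hcP with h' | h' <;> rw [h, h']
    exacts [hdisj.1, hdisj.2.1, hdisj.2.2.1, hdisj.2.2.2]
  have had : a ≠ d := by
    rcases haP with h | h <;> rcases hdP with h' | h' <;> rw [h, h']
    exacts [hdisj.1, hdisj.2.1, hdisj.2.2.1, hdisj.2.2.2]
  have hbc : b ≠ c := by
    rcases hbP with h | h <;> rcases hcP with h' | h' <;> rw [h, h']
    exacts [hdisj.1, hdisj.2.1, hdisj.2.2.1, hdisj.2.2.2]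
  have hbd : b ≠ d := by
    rcases hbP with h | h <;> rcases hdP with h' | h' <;> rw [h, h']
    exacts [hdisj.1, hdisj.2.1, hdisj.2.2.1, hdisj.2.2.2]
  have haM : a ∈ cov M := mem_cov_of_pair hp haP
  have hbM : b ∈ cov M := mem_cov_of_pair hp hbP
  have hcM : c ∈ cov M := mem_cov_of_pair hq hcP
  have hdM : d ∈ cov M := mem_cov_of_pair hq hdP
  have hq' : q ∈ M.erase p := Finset.mem_erase.2 ⟨fun h => hpq h.symm, hq⟩
  set M₀ := (M.erase p).erase q with hM₀
  have hgE : Good F (M.erase p) := good_mono (Finset.erase_subset _ _) hM.1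
  have hg₀ : Good F M₀ := good_mono (Finset.erase_subset _ _) hgE
  have hsub₀ : M₀ ⊆ M := (Finset.erase_subset _ _).trans (Finset.erase_subset _ _)
  have ha₀ : a ∉ cov M₀ := fun h =>
    notmem_cov_erase hM.1 hp haP (cov_mono (Finset.erase_subset _ _) h)
  have hb₀ : b ∉ cov M₀ := fun h =>
    notmem_cov_erase hM.1 hp hbP (cov_mono (Finset.erase_subset _ _) h)
  have hc₀ : c ∉ cov M₀ := notmem_cov_erase hgE hq' hcP
  have hd₀ : d ∉ cov M₀ := notmem_cov_erase hgE hq' hdP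
  have hx₀ : x ∉ cov M₀ := fun h => hx (cov_mono hsub₀ h)
  have hy₀ : y ∉ cov M₀ := fun h => hy (cov_mono hsub₀ h)
  have hdy : d ≠ y := fun h => hy (h ▸ hdM)
  obtain ⟨hg₁, hcov₁, hcard₁⟩ := good_insert hg₀ hdy h3 hd₀ hy₀
  have ha₁ : a ∉ cov (insert (d, y) M₀) := by
    rw [hcov₁]; simp only [Finset.mem_insert]; push_neg
    exact ⟨had, fun h => hy (h ▸ haM), ha₀⟩
  have hc₁ : c ∉ cov (insert (d, y) M₀) := by
    rw [hcov₁]; simp only [Finset.mem_insert]; push_neg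
    exact ⟨hcd', fun h => hy (h ▸ hcM), hc₀⟩
  obtain ⟨hg₂, hcov₂, hcard₂⟩ := good_insert hg₁ hac h2 ha₁ hc₁
  have hx₂ : x ∉ cov (insert (a, c) (insert (d, y) M₀)) := by
    rw [hcov₂, hcov₁]; simp only [Finset.mem_insert]; push_neg
    exact ⟨fun h => hx (h ▸ haM), fun h => hx (h ▸ hcM), fun h => hx (h ▸ hdM), hxy, hx₀⟩
  have hb₂ : b ∉ cov (insert (a, c) (insert (d, y) M₀)) := by
    rw [hcov₂, hcov₁]; simp only [Finset.mem_insert]; push_neg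
    exact ⟨fun h => hab' h.symm, hbc, hbd, fun h => hy (h ▸ hbM), hb₀⟩
  have hxb : x ≠ b := fun h => hx (h ▸ hbM)
  obtain ⟨hg₃, _, hcard₃⟩ := good_insert hg₂ hxb h1 hx₂ hb₂
  have hle := hM.2 _ hg₃
  have hc1 : (M.erase p).card = M.card - 1 := Finset.card_erase_of_mem hp
  have hc2 : M₀.card = (M.erase p).card - 1 := Finset.card_erase_of_mem hq'
  have hpos : 0 < (M.erase p).card := Finset.card_pos.2 ⟨q, hq'⟩
  have hpos' : 0 < M.card := Finset.card_pos.2 ⟨p, hp⟩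
  omega
variable [Fintype V]

def Xs (M : Finset (V × V)) : Finset V := Finset.univ \ cov M

lemma mem_Xs {M : Finset (V × V)} {x : V} : x ∈ Xs M ↔ x ∉ cov M := by simp [Xs]

lemma card_cov {F : Finset (Sym2 V)} {M : Finset (V × V)} (hM : Good F M) :
    (cov M).card = 2 * M.card := by
  rw [cov, Finset.card_biUnion]
  · rw [Finset.sum_congr rfl (fun p hp => ?_), Finset.sum_const, smul_eq_mul, mul_comm]
    · rw [Finset.card_insert_of_notMem (by simp [(hM.1 p hp).1]), Finset.card_singleton]
  · intro p hp q hq hpq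
    obtain ⟨t1, t2, t3, t4⟩ := hM.2 p hp q hq hpq
    simp only [Finset.disjoint_left, Finset.mem_insert, Finset.mem_singleton]
    rintro v (rfl | rfl) <;> rintro (h | h) <;> tauto

lemma card_Xs {F : Finset (Sym2 V)} {M : Finset (V × V)} (hM : Good F M) :
    (Xs M).card + 2 * M.card = Fintype.card V := by
  rw [Xs, Finset.card_sdiff_of_subset (Finset.subset_univ _), ← card_cov hM]
  have := Finset.card_le_card (Finset.subset_univ (cov M))
  simp only [Finset.card_univ] at *
  omega

/-- number of F-edges from v into the unmatched set -/
def dd (F : Finset (Sym2 V)) (M : Finset (V × V)) (v : V) : ℕ :=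
  ((Xs M).filter (fun x => s(v, x) ∈ F)).card

/-- number of H-edges from v into the unmatched set -/
def nb (F : Finset (Sym2 V)) (M : Finset (V × V)) (v : V) : ℕ :=
  ((Xs M).filter (fun x => s(v, x) ∉ F)).card

lemma dd_add_nb (F : Finset (Sym2 V)) (M : Finset (V × V)) (v : V) :
    dd F M v + nb F M v = (Xs M).card := by
  rw [dd, nb, Finset.card_filter_add_card_filter_not]

lemma nb_le (F : Finset (Sym2 V)) (M : Finset (V × V)) (v : V) :
    nb F M v ≤ (Xs M).card := Finset.card_le_card (Finset.filter_subset _ _)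

/-- the unmatched set is independent -/
lemma Xs_indep {F : Finset (Sym2 V)} {M : Finset (V × V)} (hM : MaxGood F M)
    {x y : V} (hx : x ∈ Xs M) (hy : y ∈ Xs M) (hxy : x ≠ y) : s(x, y) ∈ F :=
  L1 hM hxy (mem_Xs.1 hx) (mem_Xs.1 hy)

lemma nb_sum_le {F : Finset (Sym2 V)} {M : Finset (V × V)} (hM : MaxGood F M)
    {p : V × V} (hp : p ∈ M) (hm : 2 ≤ (Xs M).card) :
    nb F M p.1 + nb F M p.2 ≤ (Xs M).card := by
  set A := (Xs M).filter (fun x => s(p.1, x) ∉ F) with hA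
  set B := (Xs M).filter (fun x => s(p.2, x) ∉ F) with hB
  have key : ∀ x ∈ A, ∀ y ∈ B, x = y := by
    intro x hx y hy
    by_contra hxy
    obtain ⟨hxX, hxF⟩ := Finset.mem_filter.1 hx
    obtain ⟨hyX, hyF⟩ := Finset.mem_filter.1 hy
    exact L3 hM hp (Or.inl rfl) hxy (mem_Xs.1 hxX) (mem_Xs.1 hyX)
      (by rwa [Sym2.eq_swap]) (by rwa [Sym2.eq_swap])
  rcases Finset.eq_empty_or_nonempty A with h | ⟨x₀, hx₀⟩
  · have : nb F M p.1 = 0 := by rw [nb, ← hA, h, Finset.card_empty]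
    rw [this, zero_add]; exact nb_le F M p.2
  rcases Finset.eq_empty_or_nonempty B with h | ⟨y₀, hy₀⟩
  · have : nb F M p.2 = 0 := by rw [nb, ← hB, h, Finset.card_empty]
    rw [this, add_zero]; exact nb_le F M p.1
  have hAs : A ⊆ {y₀} := fun x hx => Finset.mem_singleton.2 (key x hx y₀ hy₀)
  have hBs : B ⊆ {x₀} := fun y hy => Finset.mem_singleton.2 (key x₀ hx₀ y hy).symm
  have : nb F M p.1 + nb F M p.2 ≤ 2 := by
    have h1 := Finset.card_le_card hAs
    have h2 := Finset.card_le_card hBs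
    simp only [Finset.card_singleton] at h1 h2
    rw [nb, nb, ← hA, ← hB]; omega
  omega

lemma dd_sum_ge {F : Finset (Sym2 V)} {M : Finset (V × V)} (hM : MaxGood F M)
    {p : V × V} (hp : p ∈ M) (hm : 2 ≤ (Xs M).card) :
    (Xs M).card ≤ dd F M p.1 + dd F M p.2 := by
  have h1 := dd_add_nb F M p.1
  have h2 := dd_add_nb F M p.2
  have := nb_sum_le hM hp hm
  omega

/-- structure of "full" (tight) matching edges -/
lemma full_structure {F : Finset (Sym2 V)} {M : Finset (V × V)} (hM : MaxGood F M)
    {p : V × V} (hp : p ∈ M) (hm : 3 ≤ (Xs M).card)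
    (hfull : dd F M p.1 + dd F M p.2 = (Xs M).card) :
    (nb F M p.1 = 0 ∧ nb F M p.2 = (Xs M).card) ∨
      (nb F M p.1 = (Xs M).card ∧ nb F M p.2 = 0) := by
  set A := (Xs M).filter (fun x => s(p.1, x) ∉ F) with hA
  set B := (Xs M).filter (fun x => s(p.2, x) ∉ F) with hB
  have key : ∀ x ∈ A, ∀ y ∈ B, x = y := by
    intro x hx y hy
    by_contra hxy
    obtain ⟨hxX, hxF⟩ := Finset.mem_filter.1 hx
    obtain ⟨hyX, hyF⟩ := Finset.mem_filter.1 hy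
    exact L3 hM hp (Or.inl rfl) hxy (mem_Xs.1 hxX) (mem_Xs.1 hyX)
      (by rwa [Sym2.eq_swap]) (by rwa [Sym2.eq_swap])
  have h1 := dd_add_nb F M p.1
  have h2 := dd_add_nb F M p.2
  have hsum : nb F M p.1 + nb F M p.2 = (Xs M).card := by omega
  rcases Finset.eq_empty_or_nonempty A with h | ⟨x₀, hx₀⟩
  · left
    have : nb F M p.1 = 0 := by rw [nb, ← hA, h, Finset.card_empty]
    omega
  rcases Finset.eq_empty_or_nonempty B with h | ⟨y₀, hy₀⟩
  · right
    have : nb F M p.2 = 0 := by rw [nb, ← hB, h, Finset.card_empty]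
    omega
  exfalso
  have hAs : A ⊆ {y₀} := fun x hx => Finset.mem_singleton.2 (key x hx y₀ hy₀)
  have hBs : B ⊆ {x₀} := fun y hy => Finset.mem_singleton.2 (key x₀ hx₀ y hy).symm
  have ha := Finset.card_le_card hAs
  have hb := Finset.card_le_card hBs
  simp only [Finset.card_singleton] at ha hb
  have : nb F M p.1 ≤ 1 := by rw [nb, ← hA]; omega
  have : nb F M p.2 ≤ 1 := by rw [nb, ← hB]; omega
  omega

/-- star lemma: from the dead end of a full edge to other matched vertices -/
lemma star_mem {F : Finset (Sym2 V)} {M : Finset (V × V)} (hM : MaxGood F M)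
    {p q : V × V} (hp : p ∈ M) (hq : q ∈ M) (hpq : p ≠ q) {a b c d : V}
    (hab : (a, b) = p ∨ (b, a) = p) (hcd : (c, d) = q ∨ (d, c) = q)
    (hb : nb F M b = (Xs M).card) (hd : 1 ≤ nb F M d) (hm : 2 ≤ (Xs M).card) :
    s(a, c) ∈ F := by
  by_contra h2
  obtain ⟨y, hy⟩ : ((Xs M).filter (fun x => s(d, x) ∉ F)).Nonempty := by
    rw [← Finset.card_pos]; exact hd
  obtain ⟨hyX, hyF⟩ := Finset.mem_filter.1 hy
  obtain ⟨x, hx⟩ : ((Xs M).erase y).Nonempty := by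
    rw [← Finset.card_pos, Finset.card_erase_of_mem hyX]; omega
  have hxy : x ≠ y := Finset.ne_of_mem_erase hx
  have hxX : x ∈ Xs M := Finset.mem_of_mem_erase hx
  have hbX : ((Xs M).filter (fun z => s(b, z) ∉ F)) = Xs M :=
    Finset.eq_of_subset_of_card_le (Finset.filter_subset _ _) (by rw [← nb, hb])
  have hxb : s(b, x) ∉ F := by
    have := hbX ▸ hxX
    rw [← hbX] at hxX
    exact (Finset.mem_filter.1 hxX).2
  exact L5 hM hp hq hpq hab hcd hxy (mem_Xs.1 hxX) (mem_Xs.1 hyX)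
    (by rwa [Sym2.eq_swap]) h2 hyF
lemma pairs_disjoint {F : Finset (Sym2 V)} {M : Finset (V × V)} (hM : Good F M) :
    ∀ p ∈ M, ∀ q ∈ M, p ≠ q →
      Disjoint ({p.1, p.2} : Finset V) ({q.1, q.2} : Finset V) := by
  intro p hp q hq hpq
  obtain ⟨t1, t2, t3, t4⟩ := hM.2 p hp q hq hpq
  simp only [Finset.disjoint_left, Finset.mem_insert, Finset.mem_singleton]
  rintro v (rfl | rfl) <;> rintro (h | h) <;> tauto

def B1 (M : Finset (V × V)) : Finset (Sym2 V) := (Xs M).offDiag.image Sym2.mk.uncurry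

lemma B1_subset {F : Finset (Sym2 V)} {M : Finset (V × V)} (hM : MaxGood F M) :
    B1 M ⊆ F := by
  intro e he
  obtain ⟨⟨x, y⟩, hxy, rfl⟩ := Finset.mem_image.1 he
  obtain ⟨hx, hy, hne⟩ := Finset.mem_offDiag.1 hxy
  exact Xs_indep hM hx hy hne

lemma B1_endpoints {M : Finset (V × V)} {e : Sym2 V} (he : e ∈ B1 M) :
    ∀ v ∈ e, v ∈ Xs M := by
  obtain ⟨⟨x, y⟩, hxy, rfl⟩ := Finset.mem_image.1 he
  obtain ⟨hx, hy, _⟩ := Finset.mem_offDiag.1 hxy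
  intro v hv
  rcases Sym2.mem_iff.1 hv with rfl | rfl <;> assumption

lemma B1_card {M : Finset (V × V)} : (Xs M).card * ((Xs M).card - 1) ≤ 2 * (B1 M).card := by
  have h1 : (Xs M).offDiag.card ≤ 2 * (B1 M).card :=
    Finset.card_le_mul_card_image _ _ (fun e _ => by
      induction e using Sym2.ind with
      | _ x y =>
        calc ((Xs M).offDiag.filter (fun z => Sym2.mk.uncurry z = s(x, y))).card
            ≤ ({(x, y), (y, x)} : Finset (V × V)).card := Finset.card_le_card (by
              intro z hz
              obtain ⟨_, hz2⟩ := Finset.mem_filter.1 hz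
              rcases Sym2.eq_iff.1 hz2 with ⟨h1, h2⟩ | ⟨h1, h2⟩ <;>
                simp [Finset.mem_insert, Prod.ext_iff, h1, h2])
          _ ≤ 2 := (Finset.card_insert_le _ _).trans (by simp))
  rw [Finset.offDiag_card] at h1
  rw [Nat.mul_sub, mul_one]
  omega
def B2 (F : Finset (Sym2 V)) (M : Finset (V × V)) : Finset (Sym2 V) :=
  ((cov M ×ˢ Xs M).filter (fun z => s(z.1, z.2) ∈ F)).image Sym2.mk.uncurry

lemma B2_subset {F : Finset (Sym2 V)} {M : Finset (V × V)} : B2 F M ⊆ F := by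
  intro e he
  obtain ⟨⟨v, x⟩, hz, rfl⟩ := Finset.mem_image.1 he
  exact (Finset.mem_filter.1 hz).2

lemma B2_endpoints {F : Finset (Sym2 V)} {M : Finset (V × V)} {e : Sym2 V}
    (he : e ∈ B2 F M) : (∃ v ∈ e, v ∈ Xs M) ∧ (∃ v ∈ e, v ∉ Xs M) := by
  obtain ⟨⟨v, x⟩, hz, rfl⟩ := Finset.mem_image.1 he
  obtain ⟨hvx, _⟩ := Finset.mem_filter.1 hz
  obtain ⟨hv, hx⟩ := Finset.mem_product.1 hvx
  exact ⟨⟨x, Sym2.mem_mk_right _ _, hx⟩, ⟨v, Sym2.mem_mk_left _ _, fun h => (mem_Xs.1 h) hv⟩⟩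

lemma B2_card {F : Finset (Sym2 V)} {M : Finset (V × V)} (hM : Good F M) :
    (B2 F M).card = ∑ p ∈ M, (dd F M p.1 + dd F M p.2) := by
  have hinj : Set.InjOn (Sym2.mk.uncurry : V × V → Sym2 V) ↑((cov M ×ˢ Xs M).filter (fun z => s(z.1, z.2) ∈ F)) := by
    rintro ⟨v, x⟩ hz ⟨v', x'⟩ hz' heq
    obtain ⟨hvx, _⟩ := Finset.mem_filter.1 hz
    obtain ⟨hvx', _⟩ := Finset.mem_filter.1 hz'
    obtain ⟨hv, hx⟩ := Finset.mem_product.1 hvx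
    obtain ⟨hv', hx'⟩ := Finset.mem_product.1 hvx'
    rcases Sym2.eq_iff.1 heq with ⟨h1, h2⟩ | ⟨h1, h2⟩
    · simp [Prod.ext_iff, h1, h2]; exact ⟨h1, h2⟩
    · exact absurd hv (by rw [h1]; exact mem_Xs.1 hx')
  rw [B2, Finset.card_image_of_injOn hinj]
  rw [Finset.card_eq_sum_card_fiberwise (f := Prod.fst) (t := cov M)
    (fun z hz => (Finset.mem_product.1 (Finset.mem_filter.1 hz).1).1)]
  have hfib : ∀ v ∈ cov M,
      (((cov M ×ˢ Xs M).filter (fun z => s(z.1, z.2) ∈ F)).filter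
        (fun z => z.1 = v)).card = dd F M v := by
    intro v hv
    rw [dd]
    apply Finset.card_nbij' (fun z => z.2) (fun x => (v, x))
    · rintro ⟨z1, z2⟩ hz
      obtain ⟨hz', hz1⟩ := Finset.mem_filter.1 hz
      obtain ⟨hvx, hF⟩ := Finset.mem_filter.1 hz'
      obtain ⟨_, hx⟩ := Finset.mem_product.1 hvx
      dsimp only at hz1 ⊢
      subst hz1
      exact Finset.mem_filter.2 ⟨hx, hF⟩
    · intro x hx
      obtain ⟨hxX, hxF⟩ := Finset.mem_filter.1 hx
      exact Finset.mem_filter.2 ⟨Finset.mem_filter.2 ⟨Finset.mem_product.2 ⟨hv, hxX⟩, hxF⟩, rfl⟩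
    · rintro ⟨z1, z2⟩ hz
      obtain ⟨_, hz1⟩ := Finset.mem_filter.1 hz
      dsimp only at hz1
      rw [hz1]
    · intro x hx; rfl
  rw [Finset.sum_congr rfl hfib]
  have hcov : ∑ v ∈ cov M, dd F M v = ∑ p ∈ M, ∑ v ∈ ({p.1, p.2} : Finset V), dd F M v := by
    rw [cov, Finset.sum_biUnion]
    intro p hp q hq hpq
    exact pairs_disjoint hM p hp q hq hpq
  rw [hcov]
  refine Finset.sum_congr rfl (fun p hp => ?_)
  rw [Finset.sum_pair (hM.1 p hp).1]
lemma arith1 {m k c : ℕ} (hm : 3 ≤ m) (h : m * (m - 1) + 2 * ((m + 1) * k) ≤ c) :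
    4 * (m + 2 * k) ≤ c + 6 := by
  obtain ⟨m', rfl⟩ : ∃ m', m = m' + 3 := ⟨m - 3, by omega⟩
  have e1 : (m' + 3) * (m' + 3 - 1) = (m' + 3) * (m' + 2) := by norm_num
  rw [e1] at h
  nlinarith [h]

lemma arith2 {m k c : ℕ} (hm : 3 ≤ m) (hk : 1 ≤ k) (hn : 9 ≤ m + 2 * k)
    (h : m * (m - 1) + 2 * (m + (m + 2) * (k - 1)) ≤ c) :
    4 * (m + 2 * k) ≤ c + 6 := by
  obtain ⟨m', rfl⟩ : ∃ m', m = m' + 3 := ⟨m - 3, by omega⟩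
  obtain ⟨k', rfl⟩ : ∃ k', k = k' + 1 := ⟨k - 1, by omega⟩
  have e1 : (m' + 3) * (m' + 3 - 1) = (m' + 3) * (m' + 2) := by norm_num
  have e2 : k' + 1 - 1 = k' := by omega
  rw [e1, e2] at h
  have h4 : 4 ≤ m' + 2 * k' := by omega
  nlinarith [h, h4, Nat.mul_le_mul_left m' h4]

lemma arith3 {m k c : ℕ} (hm : 3 ≤ m) (hk : 2 ≤ k) (hn : 9 ≤ m + 2 * k)
    (h : m * (m - 1) + 2 * (2 * m + (m + 2) * (k - 2)) + 2 ≤ c) :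
    4 * (m + 2 * k) ≤ c + 6 := by
  obtain ⟨m', rfl⟩ : ∃ m', m = m' + 3 := ⟨m - 3, by omega⟩
  obtain ⟨k', rfl⟩ : ∃ k', k = k' + 2 := ⟨k - 2, by omega⟩
  have e1 : (m' + 3) * (m' + 3 - 1) = (m' + 3) * (m' + 2) := by norm_num
  have e2 : k' + 2 - 2 = k' := by omega
  rw [e1, e2] at h
  have h4 : 2 ≤ m' + 2 * k' := by omega
  nlinarith [h, h4, Nat.mul_le_mul_left m' h4]
lemma sym2_cancel {a₀ x y : V} (h : s(a₀, x) = s(a₀, y)) (hx : a₀ ≠ x) : x = y := by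
  rcases Sym2.eq_iff.1 h with ⟨_, h2⟩ | ⟨h1, h2⟩
  · exact h2
  · exact absurd h2.symm hx

lemma sym2_solve {a b x y : V} (h : s(a, x) = s(b, y)) (hxb : x ≠ b) (hxy : x ≠ y) :
    False := by
  rcases Sym2.eq_iff.1 h with ⟨h1, h2⟩ | ⟨h1, h2⟩
  · exact hxy h2
  · exact hxb h2

lemma three_sets {F : Finset (Sym2 V)} {M : Finset (V × V)} (hM : MaxGood F M)
    {B3 : Finset (Sym2 V)} (hB3F : B3 ⊆ F) (hB3X : ∀ e ∈ B3, ∀ v ∈ e, v ∉ Xs M) :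
    (B1 M).card + (B2 F M).card + B3.card ≤ F.card := by
  have h12 : Disjoint (B1 M) (B2 F M) := Finset.disjoint_left.2 (fun e h1 h2 => by
    obtain ⟨_, v, hv, hvX⟩ := B2_endpoints h2
    exact hvX (B1_endpoints h1 v hv))
  have h3 : Disjoint (B1 M ∪ B2 F M) B3 := Finset.disjoint_left.2 (fun e h1 h2 => by
    rcases Finset.mem_union.1 h1 with h | h
    · exact hB3X e h2 e.out.1 (Sym2.out_fst_mem e) (B1_endpoints h e.out.1 (Sym2.out_fst_mem e))
    · obtain ⟨⟨v, hv, hvX⟩, _⟩ := B2_endpoints h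
      exact hB3X e h2 v hv hvX)
  calc (B1 M).card + (B2 F M).card + B3.card
      = (B1 M ∪ B2 F M ∪ B3).card := by
        rw [Finset.card_union_of_disjoint h3, Finset.card_union_of_disjoint h12]
    _ ≤ F.card := Finset.card_le_card
        (Finset.union_subset (Finset.union_subset (B1_subset hM) B2_subset) hB3F)

/-- the star finset at centre `c` over edges `S`, counted exactly -/
lemma star_card {F : Finset (Sym2 V)} {M : Finset (V × V)} (hM : MaxGood F M)
    {c : V} {S : Finset (V × V)} (hS : S ⊆ M)
    (hc : ∀ q ∈ S, c ≠ q.1 ∧ c ≠ q.2) :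
    (S.biUnion (fun q => ({s(c, q.1), s(c, q.2)} : Finset (Sym2 V)).filter (· ∈ F))).card
      = ∑ q ∈ S, (({s(c, q.1), s(c, q.2)} : Finset (Sym2 V)).filter (· ∈ F)).card := by
  rw [Finset.card_biUnion]
  intro q hq q' hq' hne
  have hqM := hS hq
  have hq'M := hS hq'
  obtain ⟨u1, u2, u3, u4⟩ := hM.1.2 q hqM q' hq'M hne
  simp only [Finset.disjoint_left, Finset.mem_filter, Finset.mem_insert,
    Finset.mem_singleton]
  rintro e ⟨h1 | h1, _⟩ ⟨h2 | h2, _⟩ <;> subst h1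
  · exact sym2_solve h2 (hc q hq).1.symm u1
  · exact sym2_solve h2 (hc q hq).1.symm u2
  · exact sym2_solve h2 (hc q hq).2.symm u3
  · exact sym2_solve h2 (hc q hq).2.symm u4

lemma star_subset {F : Finset (Sym2 V)} {S : Finset (V × V)} {c : V} :
    (S.biUnion (fun q => ({s(c, q.1), s(c, q.2)} : Finset (Sym2 V)).filter (· ∈ F))) ⊆ F :=
  fun e he => by
    obtain ⟨q, _, he'⟩ := Finset.mem_biUnion.1 he
    exact (Finset.mem_filter.1 he').2

lemma star_endpoints {F : Finset (Sym2 V)} {M S : Finset (V × V)} {c : V}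
    (hS : S ⊆ M) (hcov : c ∈ cov M) {e : Sym2 V}
    (he : e ∈ S.biUnion (fun q => ({s(c, q.1), s(c, q.2)} : Finset (Sym2 V)).filter (· ∈ F))) :
    ∀ v ∈ e, v ∈ cov M := by
  obtain ⟨q, hq, he'⟩ := Finset.mem_biUnion.1 he
  have hqM := hS hq
  have : e = s(c, q.1) ∨ e = s(c, q.2) := by
    have := (Finset.mem_filter.1 he').1
    simpa using this
  intro v hv
  rcases this with rfl | rfl <;> rcases Sym2.mem_iff.1 hv with rfl | rfl
  · exact hcov
  · exact mem_cov_of_pair hqM (Or.inl rfl)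
  · exact hcov
  · exact mem_cov_of_pair hqM (Or.inr rfl)

lemma caseB {F : Finset (Sym2 V)} {M : Finset (V × V)} (hM : MaxGood F M)
    (hm : 3 ≤ (Xs M).card) (hn : 9 ≤ Fintype.card V)
    {p₀ : V × V} (hp₀ : p₀ ∈ M) {a₀ b₀ : V} (hab₀ : (a₀, b₀) = p₀ ∨ (b₀, a₀) = p₀)
    (hb₀ : nb F M b₀ = (Xs M).card)
    (hfull₀ : dd F M p₀.1 + dd F M p₀.2 = (Xs M).card) :
    2 * Fintype.card V - 3 ≤ F.card := by
  have hnmk : (Xs M).card + 2 * M.card = Fintype.card V := card_Xs hM.1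
  have ha₀P : a₀ = p₀.1 ∨ a₀ = p₀.2 := by rcases hab₀ with h | h <;> subst h <;> simp
  have ha₀cov : a₀ ∈ cov M := mem_cov_of_pair hp₀ ha₀P
  have ha0ne : ∀ q ∈ M, q ≠ p₀ → a₀ ≠ q.1 ∧ a₀ ≠ q.2 := by
    intro q hq hne
    obtain ⟨t1, t2, t3, t4⟩ := hM.1.2 p₀ hp₀ q hq (fun h => hne h.symm)
    rcases ha₀P with h | h <;> rw [h]
    · exact ⟨t1, t2⟩
    · exact ⟨t3, t4⟩
  have hstar : ∀ q ∈ M, q ≠ p₀ → ∀ c d : V, ((c, d) = q ∨ (d, c) = q) →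
      1 ≤ nb F M d → s(a₀, c) ∈ F := by
    intro q hq hne c d hcd hd
    exact star_mem hM hp₀ hq (fun h => hne h.symm) hab₀ hcd hb₀ hd (by omega)
  have hstar1 : ∀ q ∈ M, q ≠ p₀ → (nb F M q.1 = 0 ∧ nb F M q.2 = 0) ∨
      1 ≤ (({s(a₀, q.1), s(a₀, q.2)} : Finset (Sym2 V)).filter (· ∈ F)).card := by
    intro q hq hne
    by_cases hz : nb F M q.1 = 0 ∧ nb F M q.2 = 0
    · exact Or.inl hz
    · right
      have hcase : 1 ≤ nb F M q.2 ∨ 1 ≤ nb F M q.1 := by omega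
      refine Finset.card_pos.2 ?_
      rcases hcase with h | h
      · exact ⟨s(a₀, q.1), Finset.mem_filter.2 ⟨by simp, hstar q hq hne q.1 q.2
          (Or.inl Prod.mk.eta) h⟩⟩
      · exact ⟨s(a₀, q.2), Finset.mem_filter.2 ⟨by simp, hstar q hq hne q.2 q.1
          (Or.inr Prod.mk.eta) h⟩⟩
  by_cases hT : ∃ p₁ ∈ M.erase p₀, dd F M p₁.1 + dd F M p₁.2 = (Xs M).card
  · -- at least two full edges: two star centres a₀ a₁ plus the edge between them
    obtain ⟨p₁, hp₁e, hfull₁⟩ := hT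
    have hp₁ : p₁ ∈ M := Finset.mem_of_mem_erase hp₁e
    have hp₁ne : p₁ ≠ p₀ := Finset.ne_of_mem_erase hp₁e
    obtain ⟨a₁, b₁, hab₁, hb₁⟩ : ∃ a₁ b₁, ((a₁, b₁) = p₁ ∨ (b₁, a₁) = p₁) ∧
        nb F M b₁ = (Xs M).card := by
      rcases full_structure hM hp₁ hm hfull₁ with ⟨h1, h2⟩ | ⟨h1, h2⟩
      · exact ⟨p₁.1, p₁.2, Or.inl Prod.mk.eta, h2⟩
      · exact ⟨p₁.2, p₁.1, Or.inr Prod.mk.eta, h1⟩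
    have ha₁P : a₁ = p₁.1 ∨ a₁ = p₁.2 := by rcases hab₁ with h | h <;> subst h <;> simp
    have ha₁cov : a₁ ∈ cov M := mem_cov_of_pair hp₁ ha₁P
    have ha1ne : ∀ q ∈ M, q ≠ p₁ → a₁ ≠ q.1 ∧ a₁ ≠ q.2 := by
      intro q hq hne
      obtain ⟨t1, t2, t3, t4⟩ := hM.1.2 p₁ hp₁ q hq (fun h => hne h.symm)
      rcases ha₁P with h | h <;> rw [h]
      · exact ⟨t1, t2⟩
      · exact ⟨t3, t4⟩
    have ha01 : a₀ ≠ a₁ := by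
      rcases ha₁P with h | h <;> rw [h]
      · exact (ha0ne p₁ hp₁ hp₁ne).1
      · exact (ha0ne p₁ hp₁ hp₁ne).2
    have hstar1' : ∀ q ∈ M, q ≠ p₁ → (nb F M q.1 = 0 ∧ nb F M q.2 = 0) ∨
        1 ≤ (({s(a₁, q.1), s(a₁, q.2)} : Finset (Sym2 V)).filter (· ∈ F)).card := by
      intro q hq hne
      by_cases hz : nb F M q.1 = 0 ∧ nb F M q.2 = 0
      · exact Or.inl hz
      · right
        have hcase : 1 ≤ nb F M q.2 ∨ 1 ≤ nb F M q.1 := by omega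
        refine Finset.card_pos.2 ?_
        rcases hcase with h | h
        · exact ⟨s(a₁, q.1), Finset.mem_filter.2 ⟨by simp, star_mem hM hp₁ hq
            (fun h' => hne h'.symm) hab₁ (Or.inl Prod.mk.eta) hb₁ h (by omega)⟩⟩
        · exact ⟨s(a₁, q.2), Finset.mem_filter.2 ⟨by simp, star_mem hM hp₁ hq
            (fun h' => hne h'.symm) hab₁ (Or.inr Prod.mk.eta) hb₁ h (by omega)⟩⟩
    set DE := (M.erase p₀).erase p₁ with hDE
    have hDEsub : DE ⊆ M := fun q hq =>
      Finset.mem_of_mem_erase (Finset.mem_of_mem_erase hq)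
    have hDEp0 : ∀ q ∈ DE, q ≠ p₀ := fun q hq =>
      Finset.ne_of_mem_erase (Finset.mem_of_mem_erase hq)
    have hDEp1 : ∀ q ∈ DE, q ≠ p₁ := fun q hq => Finset.ne_of_mem_erase hq
    set big0 := DE.biUnion
      (fun q => ({s(a₀, q.1), s(a₀, q.2)} : Finset (Sym2 V)).filter (· ∈ F)) with hbig0
    set big1 := DE.biUnion
      (fun q => ({s(a₁, q.1), s(a₁, q.2)} : Finset (Sym2 V)).filter (· ∈ F)) with hbig1
    have hc0 : ∀ q ∈ DE, a₀ ≠ q.1 ∧ a₀ ≠ q.2 := fun q hq =>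
      ha0ne q (hDEsub hq) (hDEp0 q hq)
    have hc1 : ∀ q ∈ DE, a₁ ≠ q.1 ∧ a₁ ≠ q.2 := fun q hq =>
      ha1ne q (hDEsub hq) (hDEp1 q hq)
    have hbig0card := star_card hM hDEsub hc0
    have hbig1card := star_card hM hDEsub hc1
    have solve01 : ∀ (x y : V), s(a₀, x) = s(a₁, y) → a₀ ≠ y → False := by
      intro x y h hy
      rcases Sym2.eq_iff.1 h with ⟨h1, _⟩ | ⟨h1, _⟩
      · exact ha01 h1
      · exact hy h1
    have hdisj01 : Disjoint big0 big1 := by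
      rw [hbig0, hbig1]
      simp only [Finset.disjoint_left, Finset.mem_biUnion, Finset.mem_filter,
        Finset.mem_insert, Finset.mem_singleton]
      rintro e ⟨q, hq, h1 | h1, _⟩ ⟨q', hq', h2 | h2, _⟩ <;> subst h1
      · exact solve01 _ _ h2 (hc0 q' hq').1
      · exact solve01 _ _ h2 (hc0 q' hq').2
      · exact solve01 _ _ h2 (hc0 q' hq').1
      · exact solve01 _ _ h2 (hc0 q' hq').2
    have hedge : s(a₀, a₁) ∈ F := by
      refine hstar p₁ hp₁ hp₁ne a₁ b₁ hab₁ ?_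
      rw [hb₁]; omega
    have hedgemem : s(a₀, a₁) ∉ big0 ∪ big1 := by
      intro h
      rcases Finset.mem_union.1 h with h | h
      · rw [hbig0] at h
        obtain ⟨q, hq, h'⟩ := Finset.mem_biUnion.1 h
        have h'' : s(a₀, a₁) = s(a₀, q.1) ∨ s(a₀, a₁) = s(a₀, q.2) := by
          have := (Finset.mem_filter.1 h').1; simpa using this
        rcases h'' with h'' | h''
        · exact (hc1 q hq).1 (sym2_cancel h'' ha01)
        · exact (hc1 q hq).2 (sym2_cancel h'' ha01)
      · rw [hbig1] at h
        obtain ⟨q, hq, h'⟩ := Finset.mem_biUnion.1 h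
        have h'' : s(a₀, a₁) = s(a₁, q.1) ∨ s(a₀, a₁) = s(a₁, q.2) := by
          have := (Finset.mem_filter.1 h').1; simpa using this
        rw [Sym2.eq_swap (a := a₀)] at h''
        rcases h'' with h'' | h''
        · exact (hc0 q hq).1 (sym2_cancel h'' ha01.symm)
        · exact (hc0 q hq).2 (sym2_cancel h'' ha01.symm)
    set B3 := insert s(a₀, a₁) (big0 ∪ big1) with hB3
    have hB3card : B3.card = 1 + (big0.card + big1.card) := by
      rw [hB3, Finset.card_insert_of_notMem hedgemem,
        Finset.card_union_of_disjoint hdisj01]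
      omega
    have hB3F : B3 ⊆ F := by
      rw [hB3]
      intro e he
      rcases Finset.mem_insert.1 he with rfl | he
      · exact hedge
      · rcases Finset.mem_union.1 he with h | h
        · exact star_subset h
        · exact star_subset h
    have hB3X : ∀ e ∈ B3, ∀ v ∈ e, v ∉ Xs M := by
      rw [hB3]
      intro e he v hv
      rcases Finset.mem_insert.1 he with rfl | he
      · rcases Sym2.mem_iff.1 hv with rfl | rfl
        · exact fun h => (mem_Xs.1 h) ha₀cov
        · exact fun h => (mem_Xs.1 h) ha₁cov
      · rcases Finset.mem_union.1 he with h | h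
        · exact fun hx => (mem_Xs.1 hx) (star_endpoints hDEsub ha₀cov h v hv)
        · exact fun hx => (mem_Xs.1 hx) (star_endpoints hDEsub ha₁cov h v hv)
    -- per-edge value over DE
    have hval : ∀ q ∈ DE, (Xs M).card + 2 ≤ (dd F M q.1 + dd F M q.2) +
        ((({s(a₀, q.1), s(a₀, q.2)} : Finset (Sym2 V)).filter (· ∈ F)).card +
         (({s(a₁, q.1), s(a₁, q.2)} : Finset (Sym2 V)).filter (· ∈ F)).card) := by
      intro q hq
      have hqM := hDEsub hq
      have hD := dd_sum_ge hM hqM (by omega)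
      rcases hstar1 q hqM (hDEp0 q hq) with ⟨h1, h2⟩ | h1
      · have e1 := dd_add_nb F M q.1
        have e2 := dd_add_nb F M q.2
        omega
      · rcases hstar1' q hqM (hDEp1 q hq) with ⟨h1', h2'⟩ | h2
        · have e1 := dd_add_nb F M q.1
          have e2 := dd_add_nb F M q.2
          omega
        · omega
    have hsum : ((Xs M).card + 2) * (M.card - 2) ≤
        (∑ q ∈ DE, (dd F M q.1 + dd F M q.2)) + (big0.card + big1.card) := by
      rw [hbig0card, hbig1card, ← Finset.sum_add_distrib, ← Finset.sum_add_distrib]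
      have hDEcard : DE.card = M.card - 2 := by
        rw [hDE, Finset.card_erase_of_mem hp₁e, Finset.card_erase_of_mem hp₀]
        omega
      calc ((Xs M).card + 2) * (M.card - 2) = DE.card * ((Xs M).card + 2) := by
            rw [hDEcard, mul_comm]
        _ ≤ _ := Finset.card_nsmul_le_sum _ _ _ hval
    have hDsum : (B2 F M).card = (dd F M p₀.1 + dd F M p₀.2) +
        ((dd F M p₁.1 + dd F M p₁.2) + ∑ q ∈ DE, (dd F M q.1 + dd F M q.2)) := by
      rw [B2_card hM.1,
        ← Finset.add_sum_erase M (fun p => dd F M p.1 + dd F M p.2) hp₀,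
        ← Finset.add_sum_erase (M.erase p₀) (fun p => dd F M p.1 + dd F M p.2) hp₁e]
    have htot := three_sets hM hB3F hB3X
    have hB1 := B1_card (M := M)
    have hk2 : 2 ≤ M.card := by
      have := Finset.card_le_card (Finset.insert_subset hp₀ (Finset.singleton_subset_iff.2 hp₁))
      rwa [Finset.card_insert_of_notMem (by simp [Ne.symm hp₁ne]), Finset.card_singleton] at this
    have harith := arith3 (m := (Xs M).card) (k := M.card) (c := 2 * F.card) hm hk2
      (by omega) (by rw [hfull₀, hfull₁] at hDsum; omega)
    omega
  · -- exactly one full edge: single star centre a₀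
    push_neg at hT
    have hval : ∀ q ∈ M.erase p₀, (Xs M).card + 2 ≤ (dd F M q.1 + dd F M q.2) +
        (({s(a₀, q.1), s(a₀, q.2)} : Finset (Sym2 V)).filter (· ∈ F)).card := by
      intro q hq
      have hqM := Finset.mem_of_mem_erase hq
      have hne := Finset.ne_of_mem_erase hq
      have hD := dd_sum_ge hM hqM (by omega)
      have hnf := hT q hq
      rcases hstar1 q hqM hne with ⟨h1, h2⟩ | h1
      · have e1 := dd_add_nb F M q.1
        have e2 := dd_add_nb F M q.2
        omega
      · omega
    have hc0 : ∀ q ∈ M.erase p₀, a₀ ≠ q.1 ∧ a₀ ≠ q.2 := fun q hq =>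
      ha0ne q (Finset.mem_of_mem_erase hq) (Finset.ne_of_mem_erase hq)
    set B3 := (M.erase p₀).biUnion
      (fun q => ({s(a₀, q.1), s(a₀, q.2)} : Finset (Sym2 V)).filter (· ∈ F)) with hB3
    have hB3card := star_card hM (fun q hq => Finset.mem_of_mem_erase hq) hc0
    have hB3F : B3 ⊆ F := star_subset
    have hB3X : ∀ e ∈ B3, ∀ v ∈ e, v ∉ Xs M := fun e he v hv hx =>
      (mem_Xs.1 hx) (star_endpoints (fun q hq => Finset.mem_of_mem_erase hq) ha₀cov he v hv)
    have hsum : ((Xs M).card + 2) * (M.card - 1) ≤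
        (∑ q ∈ M.erase p₀, (dd F M q.1 + dd F M q.2)) + B3.card := by
      rw [hB3, hB3card, ← Finset.sum_add_distrib]
      calc ((Xs M).card + 2) * (M.card - 1) = (M.erase p₀).card * ((Xs M).card + 2) := by
            rw [Finset.card_erase_of_mem hp₀, mul_comm]
        _ ≤ _ := Finset.card_nsmul_le_sum _ _ _ hval
    have hDsum : (B2 F M).card = (dd F M p₀.1 + dd F M p₀.2) +
        ∑ q ∈ M.erase p₀, (dd F M q.1 + dd F M q.2) := by
      rw [B2_card hM.1, ← Finset.add_sum_erase M (fun p => dd F M p.1 + dd F M p.2) hp₀]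
    have htot := three_sets hM hB3F hB3X
    have hB1 := B1_card (M := M)
    have harith := arith2 (m := (Xs M).card) (k := M.card) (c := 2 * F.card) hm
      (Finset.card_pos.2 ⟨p₀, hp₀⟩) (by omega) (by rw [hfull₀] at hDsum; omega)
    omega
lemma main_bound {F : Finset (Sym2 V)} {M : Finset (V × V)} (hM : MaxGood F M)
    (hm : 3 ≤ (Xs M).card) (hn : 9 ≤ Fintype.card V) :
    2 * Fintype.card V - 3 ≤ F.card := by
  by_cases hT : ∃ p ∈ M, dd F M p.1 + dd F M p.2 = (Xs M).card
  · obtain ⟨p₀, hp₀, hfull⟩ := hT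
    rcases full_structure hM hp₀ hm hfull with ⟨h1, h2⟩ | ⟨h1, h2⟩
    · exact caseB hM hm hn hp₀ (Or.inl Prod.mk.eta) h2 hfull
    · exact caseB hM hm hn hp₀ (Or.inr Prod.mk.eta) h1 hfull
  · push_neg at hT
    have hnmk : (Xs M).card + 2 * M.card = Fintype.card V := card_Xs hM.1
    have hval : ∀ p ∈ M, (Xs M).card + 1 ≤ dd F M p.1 + dd F M p.2 := by
      intro p hp
      have := dd_sum_ge hM hp (by omega)
      have := hT p hp
      omega
    have hsum : ((Xs M).card + 1) * M.card ≤ (B2 F M).card := by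
      rw [B2_card hM.1]
      calc ((Xs M).card + 1) * M.card = M.card * ((Xs M).card + 1) := mul_comm _ _
        _ ≤ _ := Finset.card_nsmul_le_sum _ _ _ hval
    have htot := three_sets hM (B3 := ∅) (by simp) (by simp)
    rw [Finset.card_empty] at htot
    have hB1 := B1_card (M := M)
    have harith := arith1 (m := (Xs M).card) (k := M.card) (c := 2 * F.card) hm (by omega)
    omega

lemma exists_apm (F : Finset (Sym2 V)) (hn : Odd (Fintype.card V))
    (h9 : 9 ≤ Fintype.card V) (hF : F.card ≤ 2 * Fintype.card V - 4) :
    ∃ M : ((⊤ : SimpleGraph V).deleteEdges ↑F).Subgraph, M.IsAlmostPerfectMatching := by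
  obtain ⟨M, hM⟩ := exists_maxgood F
  have hnmk : (Xs M).card + 2 * M.card = Fintype.card V := card_Xs hM.1
  obtain ⟨t, ht⟩ := hn
  have hodd : ∃ s, (Xs M).card = 2 * s + 1 := ⟨t - M.card, by omega⟩
  have hm1 : (Xs M).card = 1 := by
    by_contra h
    have h3 : 3 ≤ (Xs M).card := by obtain ⟨s, hs⟩ := hodd; omega
    have := main_bound hM h3 h9
    omega
  obtain ⟨v, hv⟩ := Finset.card_eq_one.1 hm1
  have hcovmem : ∀ x : V, x ∈ cov M ↔ x ≠ v := by
    intro x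
    constructor
    · intro hx hxv
      have : x ∈ Xs M := by rw [hv]; simp [hxv]
      exact (mem_Xs.1 this) hx
    · intro hxv
      by_contra hx
      have : x ∈ Xs M := mem_Xs.2 hx
      rw [hv] at this
      exact hxv (Finset.mem_singleton.1 this)
  refine ⟨⟨↑(cov M), fun x y => (x, y) ∈ M ∨ (y, x) ∈ M, ?_, ?_, ?_⟩, ?_, v, ?_⟩
  · -- adj_sub
    rintro x y (h | h)
    · have := hM.1.1 (x, y) h
      simp only [SimpleGraph.deleteEdges_adj, SimpleGraph.top_adj]
      exact ⟨this.1, by simpa using this.2⟩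
    · have := hM.1.1 (y, x) h
      simp only [SimpleGraph.deleteEdges_adj, SimpleGraph.top_adj]
      exact ⟨this.1.symm, by rw [Sym2.eq_swap]; simpa using this.2⟩
  · -- edge_vert
    rintro x y (h | h)
    · exact Finset.mem_coe.2 (mem_cov_of_pair h (Or.inl rfl))
    · exact Finset.mem_coe.2 (mem_cov_of_pair h (Or.inr rfl))
  · -- symm
    constructor; rintro x y (h | h)
    · exact Or.inr h
    · exact Or.inl h
  · -- IsMatching
    intro x hx
    obtain ⟨p, hp, hxp⟩ := mem_cov.1 (Finset.mem_coe.1 hx)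
    have hne := (hM.1.1 p hp).1
    rcases hxp with rfl | rfl
    · refine ⟨p.2, Or.inl (by rwa [Prod.mk.eta]), ?_⟩
      rintro y (h | h)
      · by_cases hqp : (p.1, y) = p
        · exact congrArg Prod.snd hqp
        · exact absurd rfl (hM.1.2 _ h p hp hqp).1
      · by_cases hqp : (y, p.1) = p
        · exact absurd (congrArg Prod.snd hqp) (by simpa using hne.symm ∘ Eq.symm)
        · exact absurd rfl (hM.1.2 _ h p hp hqp).2.2.1
    · refine ⟨p.1, Or.inr (by rwa [Prod.mk.eta]), ?_⟩
      rintro y (h | h)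
      · by_cases hqp : (p.2, y) = p
        · exact absurd (congrArg Prod.fst hqp) hne.symm
        · exact absurd rfl (hM.1.2 _ h p hp hqp).2.1
      · by_cases hqp : (y, p.2) = p
        · exact congrArg Prod.fst hqp
        · exact absurd rfl (hM.1.2 _ h p hp hqp).2.2.2
  · -- verts = {v}ᶜ
    ext x
    simp only [Finset.coe_sort_coe, Set.mem_compl_iff, Set.mem_singleton_iff,
      Finset.mem_coe]
    exact hcovmem x
lemma not_good_of_two_isolated {G' : SimpleGraph V} {u w : V} (hne : u ≠ w)
    (hu : ∀ y, ¬G'.Adj u y) (hw : ∀ y, ¬G'.Adj w y) : ¬G'.HasGoodMatching := by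
  have key : ∀ (Ms : G'.Subgraph), Ms.IsMatching →
      u ∉ Ms.verts ∧ w ∉ Ms.verts := by
    intro Ms hMs
    constructor
    · intro h
      obtain ⟨y, hy, -⟩ := hMs h
      exact hu y (Ms.adj_sub hy)
    · intro h
      obtain ⟨y, hy, -⟩ := hMs h
      exact hw y (Ms.adj_sub hy)
  rintro (⟨Ms, hMs⟩ | ⟨Ms, hMs⟩)
  · exact (key Ms hMs.1).1 (hMs.2 u)
  · obtain ⟨v, hv⟩ := hMs.2
    have h1 := (key Ms hMs.1).1
    have h2 := (key Ms hMs.1).2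
    rw [hv] at h1 h2
    simp only [Set.mem_compl_iff, Set.mem_singleton_iff, not_not] at h1 h2
    exact hne (h1.trans h2.symm)

/-- all edges at `u` within `⊤` -/
def starAt (u : V) : Finset (Sym2 V) :=
  (Finset.univ.erase u).image (fun y => s(u, y))

lemma mem_starAt {u : V} {e : Sym2 V} : e ∈ starAt u ↔ ∃ y, y ≠ u ∧ e = s(u, y) := by
  simp only [starAt, Finset.mem_image, Finset.mem_erase, Finset.mem_univ, and_true]
  constructor
  · rintro ⟨y, hy, rfl⟩; exact ⟨y, hy, rfl⟩
  · rintro ⟨y, hy, rfl⟩; exact ⟨y, hy, rfl⟩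

lemma starAt_card (u : V) : (starAt u).card = Fintype.card V - 1 := by
  rw [starAt, Finset.card_image_of_injOn, Finset.card_erase_of_mem (Finset.mem_univ u),
    Finset.card_univ]
  intro y hy y' hy' h
  have hyu : u ≠ y := fun h' => (Finset.mem_erase.1 hy).1 h'.symm
  exact sym2_cancel h hyu

lemma starAt_inter {u w : V} (hne : u ≠ w) :
    starAt u ∩ starAt w = {s(u, w)} := by
  ext e
  simp only [Finset.mem_inter, Finset.mem_singleton, mem_starAt]
  constructor
  · rintro ⟨⟨y, hy, rfl⟩, ⟨y', hy', he⟩⟩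
    rcases Sym2.eq_iff.1 he with ⟨h1, h2⟩ | ⟨h1, h2⟩
    · exact absurd h1 hne
    · rw [h2]
  · rintro rfl
    exact ⟨⟨w, Ne.symm hne, rfl⟩, ⟨u, hne, Sym2.eq_swap⟩⟩

lemma top_isolating : ∀ u w : V, u ≠ w →
    ∀ y, ¬(((⊤ : SimpleGraph V).deleteEdges ↑(starAt u ∪ starAt w)).Adj u y) := by
  intro u w hne y hadj
  rw [SimpleGraph.deleteEdges_adj] at hadj
  obtain ⟨hadj1, hadj2⟩ := hadj
  have huy : u ≠ y := hadj1.ne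
  exact hadj2 (by
    simp only [Finset.coe_union, Set.mem_union, Finset.mem_coe]
    exact Or.inl (mem_starAt.2 ⟨y, Ne.symm huy, rfl⟩))

lemma mp_top (hn : Odd (Fintype.card V)) (h9 : 9 ≤ Fintype.card V) :
    (⊤ : SimpleGraph V).mp = 2 * Fintype.card V - 3 := by
  obtain ⟨u, w, hne⟩ := Fintype.exists_pair_of_one_lt_card (α := V) (by omega)
  have hcard : (starAt u ∪ starAt w).card = 2 * Fintype.card V - 3 := by
    have h1 := Finset.card_union_add_card_inter (starAt u) (starAt w)
    rw [starAt_inter hne, starAt_card, starAt_card, Finset.card_singleton] at h1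
    omega
  have hmem : 2 * Fintype.card V - 3 ∈ { k | ∃ F : Finset (Sym2 V),
      ↑F ⊆ (⊤ : SimpleGraph V).edgeSet ∧ F.card = k ∧
      ¬ ((⊤ : SimpleGraph V).deleteEdges ↑F).HasGoodMatching } := by
    refine ⟨starAt u ∪ starAt w, ?_, hcard, ?_⟩
    · intro e he
      simp only [Finset.coe_union, Set.mem_union, Finset.mem_coe] at he
      rcases he with he | he <;> obtain ⟨y, hy, rfl⟩ := mem_starAt.1 he <;>
        simp [SimpleGraph.mem_edgeSet, Ne.symm hy]
    · refine not_good_of_two_isolated hne (top_isolating u w hne) ?_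
      have : starAt u ∪ starAt w = starAt w ∪ starAt u := Finset.union_comm _ _
      rw [this]
      exact top_isolating w u (Ne.symm hne)
  refine le_antisymm (Nat.sInf_le hmem) (le_csInf ⟨_, hmem⟩ ?_)
  intro j hj
  obtain ⟨F, hFsub, hFcard, hFng⟩ := hj
  by_contra hlt
  refine hFng ?_
  right
  exact exists_apm F hn h9 (by omega)

lemma mp_ne_of_not_top {G : SimpleGraph V} (h9 : 9 ≤ Fintype.card V) (hG : G ≠ ⊤) :
    G.mp ≠ 2 * Fintype.card V - 3 := by
  classical
  -- find a non-adjacent pair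
  obtain ⟨u, w, hne, hnadj⟩ : ∃ u w, u ≠ w ∧ ¬G.Adj u w := by
    by_contra h
    push_neg at h
    refine hG (SimpleGraph.ext ?_)
    ext x y
    simp only [SimpleGraph.top_adj]
    exact ⟨fun ha => ha.ne, fun hxy => h x y hxy⟩
  set F : Finset (Sym2 V) := G.edgeFinset.filter (fun e => u ∈ e ∨ w ∈ e) with hF
  -- F is contained in the union of two stars avoiding {u, w}, so it is small
  have hsub : F ⊆ ((Finset.univ.erase u).erase w).image (fun y => s(u, y)) ∪
      ((Finset.univ.erase u).erase w).image (fun y => s(w, y)) := by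
    intro e he
    obtain ⟨heG, heuw⟩ := Finset.mem_filter.1 he
    rw [SimpleGraph.mem_edgeFinset] at heG
    induction e using Sym2.ind with
    | _ x y =>
      rw [SimpleGraph.mem_edgeSet] at heG
      have hxy : x ≠ y := heG.ne
      simp only [Sym2.mem_iff] at heuw
      have main : ∀ a b : V, G.Adj a b → (a = u ∨ a = w) →
          (s(a, b) ∈ ((Finset.univ.erase u).erase w).image (fun y => s(u, y)) ∪
            ((Finset.univ.erase u).erase w).image (fun y => s(w, y))) := by
        intro a b hab hau
        have hbu : b ≠ u ∧ b ≠ w := by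
          constructor <;> rintro rfl
          · rcases hau with rfl | rfl
            · exact hab.ne rfl
            · exact hnadj (hab.symm)
          · rcases hau with rfl | rfl
            · exact hnadj hab
            · exact hab.ne rfl
        have hbmem : b ∈ (Finset.univ.erase u).erase w :=
          Finset.mem_erase.2 ⟨hbu.2, Finset.mem_erase.2 ⟨hbu.1, Finset.mem_univ b⟩⟩
        rw [Finset.mem_union]
        rcases hau with rfl | rfl
        · exact Or.inl (Finset.mem_image.2 ⟨b, hbmem, rfl⟩)
        · exact Or.inr (Finset.mem_image.2 ⟨b, hbmem, rfl⟩)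
      rcases heuw with (rfl | rfl) | (rfl | rfl)
      · exact main u y heG (Or.inl rfl)
      · rw [Sym2.eq_swap]
        exact main u x heG.symm (Or.inl rfl)
      · exact main w y heG (Or.inr rfl)
      · rw [Sym2.eq_swap]
        exact main w x heG.symm (Or.inr rfl)
  have hcard : F.card ≤ 2 * Fintype.card V - 4 := by
    have h1 := Finset.card_le_card hsub
    have h2 := Finset.card_union_le (((Finset.univ.erase u).erase w).image (fun y => s(u, y)))
      (((Finset.univ.erase u).erase w).image (fun y => s(w, y)))
    have h3 : ((Finset.univ.erase u).erase w).card = Fintype.card V - 2 := by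
      rw [Finset.card_erase_of_mem (Finset.mem_erase.2 ⟨Ne.symm hne, Finset.mem_univ w⟩),
        Finset.card_erase_of_mem (Finset.mem_univ u), Finset.card_univ]
      omega
    have h4 := Finset.card_image_le (s := (Finset.univ.erase u).erase w)
      (f := fun y => s(u, y))
    have h5 := Finset.card_image_le (s := (Finset.univ.erase u).erase w)
      (f := fun y => s(w, y))
    omega
  have hmem : F.card ∈ { k | ∃ F : Finset (Sym2 V), ↑F ⊆ G.edgeSet ∧ F.card = k ∧
      ¬ (G.deleteEdges ↑F).HasGoodMatching } := by
    refine ⟨F, ?_, rfl, ?_⟩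
    · intro e he
      have := Finset.mem_coe.1 he
      rw [hF, Finset.mem_filter, SimpleGraph.mem_edgeFinset] at this
      exact this.1
    · refine not_good_of_two_isolated hne ?_ ?_
      · intro y hadj
        rw [SimpleGraph.deleteEdges_adj] at hadj
        exact hadj.2 (Finset.mem_coe.2 (Finset.mem_filter.2
          ⟨SimpleGraph.mem_edgeFinset.2 hadj.1, Or.inl (Sym2.mem_mk_left _ _)⟩))
      · intro y hadj
        rw [SimpleGraph.deleteEdges_adj] at hadj
        exact hadj.2 (Finset.mem_coe.2 (Finset.mem_filter.2
          ⟨SimpleGraph.mem_edgeFinset.2 hadj.1, Or.inr (Sym2.mem_mk_left _ _)⟩))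
  have := Nat.sInf_le hmem
  rw [SimpleGraph.mp]
  omega

end Main

theorem stmt11 {V : Type*} [Fintype V] (G : SimpleGraph V)
    (hn : Odd (Fintype.card V)) (h9 : 9 ≤ Fintype.card V) :
    G.mp = 2 * Fintype.card V - 3 ↔ G = ⊤ := by
  classical
  constructor
  · intro h
    by_contra hG
    exact mp_ne_of_not_top h9 hG h
  · rintro rfl
    exact mp_top hn h9
end

section
/- For odd n ≥ 3: among all graphs on n vertices, the minimum number of edges of a graph with matching preclusion number exactly 3 is n. -/
open SimpleGraph

namespace MPAux


lemma not_good_of_isolated {V : Type*} {G : SimpleGraph V} {v w : V} (hvw : v ≠ w)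
    (hv : ∀ y, ¬ G.Adj v y) (hw : ∀ y, ¬ G.Adj w y) : ¬ G.HasGoodMatching := by
  rintro (⟨M, hM⟩ | ⟨M, hM⟩)
  · obtain ⟨y, hy, -⟩ := hM.1 (hM.2 v)
    exact hv y (M.adj_sub hy)
  · obtain ⟨hMm, x, hx⟩ := hM
    have hmem : v ∈ M.verts ∨ w ∈ M.verts := by
      rw [hx]
      by_contra h
      push_neg at h
      simp only [Set.mem_compl_iff, Set.mem_singleton_iff, not_not] at h
      exact hvw (h.1.trans h.2.symm)
    rcases hmem with h | h
    · obtain ⟨y, hy, -⟩ := hMm h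
      exact hv y (M.adj_sub hy)
    · obtain ⟨y, hy, -⟩ := hMm h
      exact hw y (M.adj_sub hy)

/-- Pull back a subgraph along a graph isomorphism. -/
def pull {V W : Type*} {G : SimpleGraph V} {H : SimpleGraph W} (φ : G ≃g H)
    (M : H.Subgraph) : G.Subgraph where
  verts := ⇑φ ⁻¹' M.verts
  Adj x y := M.Adj (φ x) (φ y)
  adj_sub h := φ.map_rel_iff.mp (M.adj_sub h)
  edge_vert h := M.edge_vert h
  symm := ⟨fun x y h => M.adj_symm h⟩

lemma good_of_iso {V W : Type*} {G : SimpleGraph V} {H : SimpleGraph W} (φ : G ≃g H)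
    (h : H.HasGoodMatching) : G.HasGoodMatching := by
  have matching : ∀ M : H.Subgraph, M.IsMatching → (pull φ M).IsMatching := by
    intro M hM x hx
    obtain ⟨y, hy, hyu⟩ := hM hx
    refine ⟨φ.symm y, ?_, ?_⟩
    · show M.Adj (φ x) (φ (φ.symm y))
      rwa [RelIso.apply_symm_apply]
    · intro z hz
      have := hyu (φ z) hz
      rw [← this, RelIso.symm_apply_apply]
  rcases h with ⟨M, hM⟩ | ⟨M, hM⟩
  · left
    refine ⟨pull φ M, matching M hM.1, fun x => ?_⟩
    exact Set.mem_preimage.mpr (hM.2 (φ x))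
  · right
    obtain ⟨hMm, x, hx⟩ := hM
    refine ⟨pull φ M, matching M hMm, φ.symm x, ?_⟩
    show ⇑φ ⁻¹' M.verts = _
    rw [hx]
    ext z
    simp [eq_comm, ← EquivLike.apply_eq_iff_eq φ, eq_comm (a := z)]

lemma no_small_preclusion {V : Type*} [Fintype V] {G : SimpleGraph V} (hmp : G.mp = 3)
    {F : Finset (Sym2 V)} (hs : ↑F ⊆ G.edgeSet) (hc : F.card ≤ 2) :
    (G.deleteEdges ↑F).HasGoodMatching := by
  by_contra h
  have : G.mp ≤ F.card := Nat.sInf_le ⟨F, hs, rfl, h⟩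
  omega

lemma key_union {V : Type*} [Fintype V] [DecidableEq V] {G : SimpleGraph V}
    [DecidableRel G.Adj] (hmp : G.mp = 3) {v w : V} (hvw : v ≠ w) :
    3 ≤ (G.incidenceFinset v ∪ G.incidenceFinset w).card := by
  by_contra hlt
  push_neg at hlt
  set F := G.incidenceFinset v ∪ G.incidenceFinset w with hF
  have hs : ↑F ⊆ G.edgeSet := by
    intro e he
    rw [Finset.mem_coe, hF, Finset.mem_union] at he
    rcases he with he | he <;>
      · rw [mem_incidenceFinset] at he
        exact G.incidenceSet_subset _ he
  have good := no_small_preclusion hmp hs (by omega)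
  have hiso : ∀ z : V, (∀ y, ¬ (G.deleteEdges ↑F).Adj z y) ∨
      z ∉ ({v, w} : Set V) := by
    intro z
    by_cases hz : z ∈ ({v, w} : Set V)
    · left
      intro y hy
      rw [deleteEdges_adj] at hy
      apply hy.2
      rw [Finset.mem_coe, hF, Finset.mem_union]
      rcases hz with rfl | rfl
      · exact Or.inl (by rw [mem_incidenceFinset, mem_incidenceSet]; exact hy.1)
      · exact Or.inr (by rw [mem_incidenceFinset, mem_incidenceSet]; exact hy.1)
    · exact Or.inr hz
  have hvis : ∀ y, ¬ (G.deleteEdges ↑F).Adj v y := by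
    rcases hiso v with h | h
    · exact h
    · exact absurd (Set.mem_insert v _) h
  have hwis : ∀ y, ¬ (G.deleteEdges ↑F).Adj w y := by
    rcases hiso w with h | h
    · exact h
    · exact absurd (Set.mem_insert_of_mem _ rfl) h
  exact not_good_of_isolated hvw hvis hwis good


lemma count_lower {n : ℕ} (h3 : 3 ≤ n) {G : SimpleGraph (Fin n)} [DecidableRel G.Adj]
    (hkey : ∀ v w : Fin n, v ≠ w → 3 ≤ (G.incidenceFinset v ∪ G.incidenceFinset w).card) :
    n ≤ G.edgeSet.ncard := by
  classical
  have hE : G.edgeSet.ncard = G.edgeFinset.card := by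
    simp [Set.ncard_eq_toFinset_card', edgeFinset]
  rw [hE]
  have hsum := G.sum_degrees_eq_twice_card_edges
  suffices h : 2 * n ≤ ∑ v, G.degree v by omega
  have hdeg1 : ∀ v w : Fin n, v ≠ w → 3 ≤ G.degree v + G.degree w := by
    intro v w hvw
    calc 3 ≤ (G.incidenceFinset v ∪ G.incidenceFinset w).card := hkey v w hvw
    _ ≤ _ := by
        rw [← G.card_incidenceFinset_eq_degree v, ← G.card_incidenceFinset_eq_degree w]
        exact Finset.card_union_le _ _
  by_cases hmin : ∀ v, 2 ≤ G.degree v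
  · calc 2 * n = ∑ _v : Fin n, 2 := by simp [Finset.sum_const, mul_comm]
    _ ≤ ∑ v, G.degree v := Finset.sum_le_sum fun v _ => hmin v
  · push_neg at hmin
    obtain ⟨v, hv⟩ := hmin
    have hv1 : G.degree v ≤ 1 := by omega
    by_cases h0 : G.degree v = 0
    · -- every other vertex has degree ≥ 3
      have hw3 : ∀ w, w ≠ v → 3 ≤ G.degree w := by
        intro w hw
        have hincv : G.incidenceFinset v = ∅ := by
          rw [← Finset.card_eq_zero, G.card_incidenceFinset_eq_degree v, h0]
        have := hkey v w (Ne.symm hw)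
        rwa [hincv, Finset.empty_union, G.card_incidenceFinset_eq_degree] at this
      have : ∑ w ∈ Finset.univ.erase v, G.degree w + G.degree v = ∑ w, G.degree w :=
        Finset.sum_erase_add _ _ (Finset.mem_univ v)
      have hcard : (Finset.univ.erase v).card = n - 1 := by
        rw [Finset.card_erase_of_mem (Finset.mem_univ v)]; simp
      have h3n : (n - 1) * 3 ≤ ∑ w ∈ Finset.univ.erase v, G.degree w := by
        calc (n-1) * 3 = (Finset.univ.erase v).card * 3 := by rw [hcard]
        _ ≤ _ := Finset.card_nsmul_le_sum _ _ 3 fun w hw => hw3 w (Finset.ne_of_mem_erase hw)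
      omega
    · have hdv : G.degree v = 1 := by omega
      obtain ⟨u, hu⟩ := Finset.card_eq_one.mp (by rw [← G.card_neighborFinset_eq_degree] at hdv; exact hdv)
      have hadj : G.Adj v u := by
        rw [← mem_neighborFinset, hu]; exact Finset.mem_singleton_self u
      have hvu : v ≠ u := G.ne_of_adj hadj
      have hsub : G.incidenceFinset v ⊆ G.incidenceFinset u := by
        intro e he
        rw [mem_incidenceFinset] at he ⊢
        obtain ⟨hea, hv'⟩ := he
        induction e with
        | h x y =>
          rw [Sym2.mem_iff] at hv'
          have hadj' : G.Adj x y := hea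
          rw [mk'_mem_incidenceSet_iff]
          rcases hv' with rfl | rfl
          · have hy : y ∈ G.neighborFinset v := by rwa [mem_neighborFinset]
            rw [hu, Finset.mem_singleton] at hy
            subst hy
            exact ⟨hadj', Or.inr rfl⟩
          · have hx : x ∈ G.neighborFinset v := by rw [mem_neighborFinset]; exact hadj'.symm
            rw [hu, Finset.mem_singleton] at hx
            subst hx
            exact ⟨hadj', Or.inl rfl⟩
      have hu3 : 3 ≤ G.degree u := by
        have := hkey v u hvu
        rwa [Finset.union_eq_right.mpr hsub, G.card_incidenceFinset_eq_degree] at this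
      have hw2 : ∀ w, w ≠ v → 2 ≤ G.degree w := by
        intro w hw
        have := hdeg1 v w (Ne.symm hw)
        omega
      -- sum split
      have husub : u ∈ Finset.univ.erase v := Finset.mem_erase.mpr ⟨Ne.symm hvu, Finset.mem_univ u⟩
      have e1 : ∑ w ∈ Finset.univ.erase v, G.degree w + G.degree v = ∑ w, G.degree w :=
        Finset.sum_erase_add _ _ (Finset.mem_univ v)
      have e2 : ∑ w ∈ (Finset.univ.erase v).erase u, G.degree w + G.degree u
          = ∑ w ∈ Finset.univ.erase v, G.degree w :=
        Finset.sum_erase_add _ _ husub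
      have hcard : ((Finset.univ.erase v).erase u).card = n - 2 := by
        rw [Finset.card_erase_of_mem husub, Finset.card_erase_of_mem (Finset.mem_univ v)]
        simp only [Finset.card_univ, Fintype.card_fin]
        omega
      have h2n : (n - 2) * 2 ≤ ∑ w ∈ (Finset.univ.erase v).erase u, G.degree w := by
        calc (n-2)*2 = ((Finset.univ.erase v).erase u).card * 2 := by rw [hcard]
        _ ≤ _ := Finset.card_nsmul_le_sum _ _ 2 fun w hw =>
            hw2 w (Finset.ne_of_mem_erase (Finset.mem_of_mem_erase hw))
      omega



variable (n : ℕ) [NeZero n]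

def cyc : SimpleGraph (Fin n) where
  Adj i j := i ≠ j ∧ (i + 1 = j ∨ j + 1 = i)
  symm := ⟨by
    intro i j ⟨h1, h2⟩
    exact ⟨h1.symm, h2.symm⟩⟩
  loopless := ⟨fun i h => h.1 rfl⟩

def E (i : Fin n) : Sym2 (Fin n) := s(i, i + 1)

variable {n}

lemma val_one' (h2 : 2 ≤ n) : (1 : Fin n).val = 1 := by
  rw [Fin.val_one']
  exact Nat.mod_eq_of_lt (by omega)

lemma succ_val (h2 : 2 ≤ n) (x : Fin n) :
    (x + 1).val = if x.val + 1 = n then 0 else x.val + 1 := by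
  rw [Fin.val_add, val_one' h2]
  have := x.isLt
  split_ifs with h
  · rw [h, Nat.mod_self]
  · exact Nat.mod_eq_of_lt (by omega)

lemma mk_add_one (i : ℕ) (h : i + 1 < n) :
    (⟨i, by omega⟩ : Fin n) + 1 = ⟨i + 1, h⟩ := by
  apply Fin.ext
  rw [succ_val (by omega)]
  simp only [Fin.val_mk]
  split_ifs <;> omega

lemma succ_ne (h2 : 2 ≤ n) (x : Fin n) : x + 1 ≠ x := by
  intro h
  have h1 := congrArg Fin.val h
  rw [succ_val h2] at h1
  have h2' := x.isLt
  split_ifs at h1 <;> omega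

lemma cyc_adj_succ (h2 : 2 ≤ n) (x : Fin n) : (cyc n).Adj x (x + 1) := by
  exact ⟨(succ_ne h2 x).symm, Or.inl rfl⟩

lemma E_mem_edgeSet (h2 : 2 ≤ n) (i : Fin n) : E n i ∈ (cyc n).edgeSet :=
  (cyc n).mem_edgeSet.mpr (cyc_adj_succ h2 i)

lemma mem_edgeSet_iff (h2 : 2 ≤ n) (e : Sym2 (Fin n)) :
    e ∈ (cyc n).edgeSet ↔ ∃ i, e = E n i := by
  constructor
  · induction e with
  | h x y =>
      intro h
      rw [mem_edgeSet] at h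
      obtain ⟨hne, h | h⟩ := h
      · exact ⟨x, by rw [← h]; rfl⟩
      · exact ⟨y, by rw [← h, E, Sym2.eq_swap]⟩
  · rintro ⟨i, rfl⟩
    rw [E, mem_edgeSet]
    exact ⟨fun h => succ_ne h2 i h.symm, Or.inl rfl⟩

def lo (m i : ℕ) : Prop := (i < m ∧ i % 2 = 0) ∨ (m < i ∧ i % 2 = 1)

lemma cycle_matching (hodd : n % 2 = 1) (h3 : 3 ≤ n)
    {m : ℕ} (hm : m < n) (hme : m % 2 = 0)
    {H : SimpleGraph (Fin n)}
    (hH : ∀ i : ℕ, (h : i + 1 < n) → lo m i → H.Adj ⟨i, by omega⟩ ⟨i + 1, h⟩) :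
    H.HasGoodMatching := by
  right
  refine ⟨{ verts := {(⟨m, hm⟩ : Fin n)}ᶜ
            Adj := fun x y => (y.val = x.val + 1 ∧ lo m x.val) ∨ (x.val = y.val + 1 ∧ lo m y.val)
            adj_sub := ?_
            edge_vert := ?_
            symm := ?_ }, ?_, ⟨m, hm⟩, rfl⟩
  · rintro x y (⟨h1, h2⟩ | ⟨h1, h2⟩)
    · have hlt : x.val + 1 < n := h1 ▸ y.isLt
      have h := hH x.val hlt h2
      have hx : (⟨x.val, x.isLt⟩ : Fin n) = x := rfl
      have hy : (⟨x.val + 1, hlt⟩ : Fin n) = y := Fin.ext h1.symm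
      rwa [hx, hy] at h
    · have hlt : y.val + 1 < n := h1 ▸ x.isLt
      have h := hH y.val hlt h2
      have hy : (⟨y.val, y.isLt⟩ : Fin n) = y := rfl
      have hx : (⟨y.val + 1, hlt⟩ : Fin n) = x := Fin.ext h1.symm
      rw [hy, hx] at h
      exact h.symm
  · rintro x y (⟨h1, h2⟩ | ⟨h1, h2⟩) <;>
      · simp only [Set.mem_compl_iff, Set.mem_singleton_iff]
        intro hx
        have hxm : x.val = m := by rw [hx]
        simp only [lo] at h2
        omega
  · constructor
    rintro x y (⟨h1, h2⟩ | ⟨h1, h2⟩)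
    · exact Or.inr ⟨h1, h2⟩
    · exact Or.inl ⟨h1, h2⟩
  · intro v hv
    have hvm : v.val ≠ m := by
      simp only [Set.mem_compl_iff, Set.mem_singleton_iff] at hv
      intro h; exact hv (Fin.ext h)
    have hvn := v.isLt
    by_cases hl : lo m v.val
    · have hlt : v.val + 1 < n := by
        simp only [lo] at hl; omega
      refine ⟨⟨v.val + 1, hlt⟩, Or.inl ⟨rfl, hl⟩, ?_⟩
      rintro y (⟨h1, h2⟩ | ⟨h1, h2⟩)
      · exact Fin.ext h1
      · exfalso; simp only [lo] at hl h2; omega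
    · have hge : 1 ≤ v.val ∧ lo m (v.val - 1) := by
        simp only [lo] at hl ⊢; omega
      refine ⟨⟨v.val - 1, by omega⟩, Or.inr ⟨by simp only [Fin.val_mk]; omega, hge.2⟩, ?_⟩
      rintro y (⟨h1, h2⟩ | ⟨h1, h2⟩)
      · exact absurd h2 hl
      · exact Fin.ext (by simp only [Fin.val_mk]; omega)


lemma last_add_one (h2 : 2 ≤ n) : (⟨n - 1, by omega⟩ : Fin n) + 1 = ⟨0, by omega⟩ := by
  apply Fin.ext
  rw [succ_val h2]
  simp only [Fin.val_mk]
  split_ifs <;> omega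

lemma cyc_del_two_good (hodd : n % 2 = 1) (h3 : 3 ≤ n) (a : Fin n)
    (F : Set (Sym2 (Fin n)))
    (hF : ∀ e ∈ F, e = E n a ∨ e = E n ⟨n - 1, by omega⟩) :
    ((cyc n).deleteEdges F).HasGoodMatching := by
  set m : ℕ := if a.val % 2 = 1 then a.val + 1 else 0 with hmdef
  have hav := a.isLt
  have hm : m < n := by rw [hmdef]; split_ifs <;> omega
  have hme : m % 2 = 0 := by rw [hmdef]; split_ifs <;> omega
  apply cycle_matching hodd h3 hm hme
  intro i hi hlo
  rw [deleteEdges_adj]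
  constructor
  · rw [← mk_add_one i hi]
    exact cyc_adj_succ (by omega) _
  · intro hmem
    rcases hF _ hmem with he | he
    · rw [E] at he
      have hsa := succ_val (show 2 ≤ n by omega) a
      have hval := Sym2.eq_iff.mp he
      simp only [Fin.ext_iff, Fin.val_mk, hsa] at hval
      simp only [lo] at hlo
      rw [hmdef] at hlo
      split_ifs at hval hlo <;> omega
    · rw [E, last_add_one (show 2 ≤ n by omega)] at he
      have hval := Sym2.eq_iff.mp he
      simp only [Fin.ext_iff, Fin.val_mk] at hval
      omega

def rotIso (c : Fin n) (F : Finset (Sym2 (Fin n))) :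
    ((cyc n).deleteEdges ↑F) ≃g
      ((cyc n).deleteEdges ↑(F.image (Sym2.map (· + c)))) := by
  refine ⟨Equiv.addRight c, ?_⟩
  intro x y
  simp only [Equiv.coe_addRight, deleteEdges_adj]
  have hshift : ∀ u v : Fin n, u + c + 1 = v + c ↔ u + 1 = v := by
    intro u v
    rw [add_right_comm]
    exact add_left_inj c
  have hadj : (cyc n).Adj (x + c) (y + c) ↔ (cyc n).Adj x y := by
    show (x + c ≠ y + c ∧ _) ↔ (x ≠ y ∧ _)
    rw [hshift, hshift, (add_left_inj c).ne]
  rw [hadj]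
  have hmem : s(x + c, y + c) ∈ (↑(F.image (Sym2.map (· + c))) : Set (Sym2 (Fin n))) ↔ s(x, y) ∈ (↑F : Set (Sym2 (Fin n))) := by
    simp only [Finset.coe_image, Set.mem_image, Finset.mem_coe]
    constructor
    · rintro ⟨z, hz, heq⟩
      have : z = s(x, y) := by
        apply Sym2.map.injective (add_left_injective c)
        rw [heq, Sym2.map_pair_eq]
      rwa [← this]
    · intro h
      exact ⟨s(x, y), h, by rw [Sym2.map_pair_eq]⟩
  rw [hmem]

lemma cyc_del_good (hodd : n % 2 = 1) (h3 : 3 ≤ n)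
    {F : Finset (Sym2 (Fin n))} (hsub : ↑F ⊆ (cyc n).edgeSet) (hc : F.card ≤ 2) :
    ((cyc n).deleteEdges ↑F).HasGoodMatching := by
  have hEx : ∀ e ∈ F, ∃ i, e = E n i := fun e he =>
    (mem_edgeSet_iff (by omega) e).mp (hsub he)
  have hab : ∃ a b : Fin n, ∀ e ∈ F, e = E n a ∨ e = E n b := by
    rcases Nat.lt_or_ge F.card 1 with h | h
    · have h0 : F = ∅ := Finset.card_eq_zero.mp (show F.card = 0 by omega)
      refine ⟨⟨0, by omega⟩, ⟨0, by omega⟩, fun e he => absurd he ?_⟩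
      rw [h0]
      simp
    rcases Nat.lt_or_ge F.card 2 with h' | h'
    · obtain ⟨x, hx⟩ := Finset.card_eq_one.mp (show F.card = 1 by omega)
      obtain ⟨a, ha⟩ := hEx x (by rw [hx]; exact Finset.mem_singleton_self x)
      refine ⟨a, a, fun e he => ?_⟩
      rw [hx, Finset.mem_singleton] at he
      subst he
      exact Or.inl ha
    · have h2 : F.card = 2 := by omega
      obtain ⟨x, y, hxy, hF2⟩ := Finset.card_eq_two.mp h2
      obtain ⟨a, ha⟩ := hEx x (by rw [hF2]; simp)
      obtain ⟨b, hb⟩ := hEx y (by rw [hF2]; simp)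
      refine ⟨a, b, fun e he => ?_⟩
      rw [hF2, Finset.mem_insert, Finset.mem_singleton] at he
      rcases he with rfl | rfl
      · exact Or.inl ha
      · exact Or.inr hb
  obtain ⟨a, b, hab⟩ := hab
  set c : Fin n := (⟨n - 1, by omega⟩ : Fin n) - b with hcdef
  apply good_of_iso (rotIso c F)
  apply cyc_del_two_good hodd h3 (a + c)
  intro e he
  simp only [Finset.coe_image, Set.mem_image, Finset.mem_coe] at he
  obtain ⟨z, hz, rfl⟩ := he
  rcases hab z hz with rfl | rfl
  · left
    rw [E, E, Sym2.map_pair_eq, add_right_comm a 1 c]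
  · right
    have hbc : b + c = (⟨n - 1, by omega⟩ : Fin n) := by
      rw [hcdef, add_comm, sub_add_cancel]
    rw [E, E, Sym2.map_pair_eq, add_right_comm b 1 c, hbc]


lemma E_injective (h3 : 3 ≤ n) : Function.Injective (E n) := by
  intro i j h
  rw [E, E] at h
  rcases Sym2.eq_iff.mp h with ⟨h1, _⟩ | ⟨h1, h2⟩
  · exact h1
  · exfalso
    have hi := congrArg Fin.val h1
    have hj := congrArg Fin.val h2
    rw [succ_val (by omega)] at hi hj
    have := i.isLt
    have := j.isLt
    split_ifs at hi hj <;> omega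

lemma cyc_edgeSet_ncard (h3 : 3 ≤ n) : (cyc n).edgeSet.ncard = n := by
  have hset : (cyc n).edgeSet = ↑(Finset.univ.image (E n)) := by
    ext e
    simp only [Finset.coe_image, Finset.coe_univ, Set.image_univ, Set.mem_range]
    rw [mem_edgeSet_iff (by omega)]
    exact exists_congr fun i => eq_comm
  rw [hset, Set.ncard_coe_finset, Finset.card_image_of_injective _ (E_injective h3)]
  simp

set_option maxHeartbeats 2000000 in
lemma cyc_mp (hodd : n % 2 = 1) (h3 : 3 ≤ n) : (cyc n).mp = 3 := by
  obtain ⟨F₀, hF0⟩ : ∃ F₀ : Finset (Sym2 (Fin n)),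
      F₀ = {E n ⟨0, by omega⟩, E n ⟨1, by omega⟩, E n ⟨2, by omega⟩} := ⟨_, rfl⟩
  have e0 : E n ⟨0, by omega⟩ = s((⟨0, by omega⟩ : Fin n), (⟨1, by omega⟩ : Fin n)) := by
    rw [E, mk_add_one 0 (by omega)]
  have e1 : E n ⟨1, by omega⟩ = s((⟨1, by omega⟩ : Fin n), (⟨2, by omega⟩ : Fin n)) := by
    rw [E, mk_add_one 1 (by omega)]
  have hv2 : ((⟨2, by omega⟩ : Fin n) + 1).val = if 2 + 1 = n then 0 else 2 + 1 := by
    rw [succ_val (by omega)]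
  have hne01 : E n ⟨0, by omega⟩ ≠ E n ⟨1, by omega⟩ := by
    rw [e0, e1]
    intro h
    simp only [Sym2.eq_iff, Fin.ext_iff, Fin.val_mk] at h
    omega
  have hne02 : E n ⟨0, by omega⟩ ≠ E n ⟨2, by omega⟩ := by
    rw [e0, E]
    intro h
    rcases Sym2.eq_iff.mp h with ⟨h1, -⟩ | ⟨-, h2⟩
    · have := congrArg Fin.val h1
      simp only [Fin.val_mk] at this
      omega
    · have := congrArg Fin.val h2
      simp only [Fin.val_mk] at this
      omega
  have hne12 : E n ⟨1, by omega⟩ ≠ E n ⟨2, by omega⟩ := by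
    rw [e1, E]
    intro h
    rcases Sym2.eq_iff.mp h with ⟨h1, -⟩ | ⟨h1, -⟩
    · have := congrArg Fin.val h1
      simp only [Fin.val_mk] at this
      omega
    · have := congrArg Fin.val h1
      rw [hv2] at this
      simp only [Fin.val_mk] at this
      split_ifs at this <;> omega
  have hcard : F₀.card = 3 := by
    rw [hF0]
    rw [Finset.card_insert_of_notMem (by simp only [Finset.mem_insert, Finset.mem_singleton, not_or]; exact ⟨hne01, hne02⟩),
      Finset.card_insert_of_notMem (by simp [hne12]), Finset.card_singleton]
  have hs : ↑F₀ ⊆ (cyc n).edgeSet := by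
    intro e he
    rw [Finset.mem_coe, hF0, Finset.mem_insert, Finset.mem_insert, Finset.mem_singleton] at he
    rcases he with rfl | rfl | rfl <;> exact E_mem_edgeSet (by omega) _
  have hng : ¬ ((cyc n).deleteEdges ↑F₀).HasGoodMatching := by
    apply not_good_of_isolated (v := (⟨1, by omega⟩ : Fin n)) (w := (⟨2, by omega⟩ : Fin n))
    · intro h
      have := congrArg Fin.val h
      simp only [Fin.val_mk] at this
      omega
    · intro y hy
      obtain ⟨⟨hne, hor⟩, hmem⟩ := deleteEdges_adj.mp hy
      apply hmem
      rw [Finset.mem_coe, hF0, Finset.mem_insert, Finset.mem_insert, Finset.mem_singleton]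
      rcases hor with h | h
      · right; left
        subst h
        rfl
      · -- y + 1 = ⟨1⟩, so y = ⟨0⟩
        have hyv := congrArg Fin.val h
        rw [succ_val (by omega)] at hyv
        simp only [Fin.val_mk] at hyv
        have hy0 : y = ⟨0, by omega⟩ := by
          apply Fin.ext
          simp only [Fin.val_mk]
          split_ifs at hyv <;> omega
        left
        rw [hy0, e0]
        exact Sym2.eq_swap
    · intro y hy
      obtain ⟨⟨hne, hor⟩, hmem⟩ := deleteEdges_adj.mp hy
      apply hmem
      rw [Finset.mem_coe, hF0, Finset.mem_insert, Finset.mem_insert, Finset.mem_singleton]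
      rcases hor with h | h
      · right; right
        subst h
        rfl
      · have hyv := congrArg Fin.val h
        rw [succ_val (by omega)] at hyv
        simp only [Fin.val_mk] at hyv
        have hy1 : y = ⟨1, by omega⟩ := by
          apply Fin.ext
          simp only [Fin.val_mk]
          split_ifs at hyv <;> omega
        right; left
        rw [hy1, e1]
        exact Sym2.eq_swap
  have mem3 : 3 ∈ { k | ∃ F : Finset (Sym2 (Fin n)), ↑F ⊆ (cyc n).edgeSet ∧ F.card = k ∧
      ¬ ((cyc n).deleteEdges ↑F).HasGoodMatching } := ⟨F₀, hs, hcard, hng⟩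
  have hlow : ∀ k ∈ { k | ∃ F : Finset (Sym2 (Fin n)), ↑F ⊆ (cyc n).edgeSet ∧ F.card = k ∧
      ¬ ((cyc n).deleteEdges ↑F).HasGoodMatching }, 3 ≤ k := by
    rintro k ⟨F, hFs, rfl, hbad⟩
    by_contra hlt
    push_neg at hlt
    exact hbad (cyc_del_good hodd h3 hFs (by omega))
  exact le_antisymm (Nat.sInf_le mem3) (le_csInf ⟨3, mem3⟩ hlow)


end MPAux

theorem stmt15 (n : ℕ) (hn : Odd n) (h3 : 3 ≤ n) :
    IsLeast { m | ∃ G : SimpleGraph (Fin n), G.mp = 3 ∧ G.edgeSet.ncard = m } n := by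
  have hodd : n % 2 = 1 := Nat.odd_iff.mp hn
  haveI : NeZero n := ⟨by omega⟩
  constructor
  · exact ⟨MPAux.cyc n, MPAux.cyc_mp hodd h3, MPAux.cyc_edgeSet_ncard h3⟩
  · rintro m ⟨G, hmp, rfl⟩
    classical
    exact MPAux.count_lower h3 fun v w hvw => MPAux.key_union hmp hvw
end
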